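/- arXiv:2507.21689 — 8 statements merged into one kernel-verified Lean document; each statement's English description precedes it below -/
import Mathlib

section
/- Let $m \ge q \ge 2$ be integers and $\alpha > 1$ be a real number. There exists a constant $C = C(m,q,\alpha)$ such that for every $n \in \mathbb{N}$, $q!\,|T_{m,n}^{q}|\, n^{-q/\alpha} \le \lambda_{\alpha}(T_{m,n}^{q}) \le (1 + C n^{-2})\, q!\,|T_{m,n}^{q}|\, n^{-q/\alpha}$. -/
open scoped Classical
open Finset Filter Real

/-- An `r`-uniform hypergraph on vertex set `Fin n`. -/
structure RGraph (r n : ℕ) where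
  edges : Finset (Finset (Fin n))
  card_eq : ∀ e ∈ edges, e.card = r

/-- The set (as a `Finset`) of injective homomorphisms from `Q` to `H`. -/
noncomputable def Inj {r a b : ℕ} (Q : RGraph r a) (H : RGraph r b) :
    Finset (Fin a → Fin b) :=
  Finset.univ.filter fun φ => Function.Injective φ ∧ ∀ e ∈ Q.edges, e.image φ ∈ H.edges

/-- The Lagrangian `Q`-polynomial of `H`. -/
noncomputable def lagPoly {r a n : ℕ} (Q : RGraph r a) (H : RGraph r n)
    (x : Fin n → ℝ) : ℝ :=
  ∑ φ ∈ Inj Q H, ∏ i ∈ Finset.univ.image φ, x i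

/-- The domain `Δ_α^{n-1} = {x : |x_1|^α + ⋯ + |x_n|^α = 1}`. -/
def simplex (α : ℝ) (n : ℕ) : Set (Fin n → ℝ) :=
  {x | ∑ i, |x i| ^ α = 1}

/-- The `(α,Q)`-spectral radius of `H`. -/
noncomputable def specRad (α : ℝ) {r a n : ℕ} (Q : RGraph r a) (H : RGraph r n) : ℝ :=
  sSup (lagPoly Q H '' simplex α n)

/-- The set of optimal vectors. -/
noncomputable def OPT (α : ℝ) {r a n : ℕ} (Q : RGraph r a) (H : RGraph r n) :
    Set (Fin n → ℝ) :=
  {x ∈ simplex α n | lagPoly Q H x = specRad α Q H}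
/-- The balanced complete `m`-partite `q`-graph on `n` vertices: parts are the residue
classes mod `m`, edges are the `q`-subsets meeting each part in at most one vertex. -/
def TuranHG (m q n : ℕ) : RGraph q n where
  edges := (Finset.powersetCard q Finset.univ).filter
    (fun e => ∀ v ∈ e, ∀ w ∈ e, v.val % m = w.val % m → v = w)
  card_eq := fun e he => (Finset.mem_powersetCard.mp (Finset.mem_filter.mp he).1).2

/-- The classical Lagrangian polynomial `P_H(x) = q! ∑_{e ∈ H} ∏_{i ∈ e} x_i`. -/
noncomputable def lagPolyEdge {q n : ℕ} (H : RGraph q n) (x : Fin n → ℝ) : ℝ :=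
  (q.factorial : ℝ) * ∑ e ∈ H.edges, ∏ i ∈ e, x i

/-- The `α`-spectral radius `λ_α(H)` of a `q`-graph `H`. -/
noncomputable def specRadEdge (α : ℝ) {q n : ℕ} (H : RGraph q n) : ℝ :=
  sSup (lagPolyEdge H '' simplex α n)

/-!
The uniform vector with entries `n ^ (-1/α)` gives the lower bound. For the upper bound,
`P(x) ≤ q! e_q(s)` where `s_j` is the mass of `|x|` on the `j`-th part; Maclaurin's inequality
bounds `e_q(s)` by `C(m,q) (∑ s / m)^q`, and the power-mean inequality gives
`∑ |x_i| ≤ n ^ (1 - 1/α)` on `Δ_α`. It remains to compare `C(m,q) (n/m)^q` with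
`|T| = e_q(c)`, `c` the part sizes: expanding `∏ (a + (c_j - a))` around `a = n/m`, the linear
term vanishes because `∑ (c_j - a) = 0`, and the rest is `O(a^(q-2))`, a relative error `O(n^-2)`.
-/

/-- `esymm s k` is `MvPolynomial.esymm β ℝ k` evaluated at `s`. -/
noncomputable def esymm {β : Type*} [Fintype β] (s : β → ℝ) (k : ℕ) : ℝ :=
  ∑ J ∈ powersetCard k univ, ∏ j ∈ J, s j

theorem sum_sum_mul_sub_self_nonneg {β : Type*} (s : β → ℝ) (T : Finset β) :
    0 ≤ ∑ j ∈ T, ∑ l ∈ T, s j * (s j - s l) := by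
  have hswap : ∑ j ∈ T, ∑ l ∈ T, s j * (s j - s l) = ∑ j ∈ T, ∑ l ∈ T, s l * (s l - s j) :=
    sum_comm
  have hsq : 0 ≤ ∑ j ∈ T, ∑ l ∈ T, (s j - s l) ^ 2 := by positivity
  have hdouble : ∑ j ∈ T, ∑ l ∈ T, (s j - s l) ^ 2
      = ∑ j ∈ T, ∑ l ∈ T, s j * (s j - s l) + ∑ j ∈ T, ∑ l ∈ T, s l * (s l - s j) := by
    rw [← sum_add_distrib]
    exact sum_congr rfl fun j _ => by rw [← sum_add_distrib]; exact sum_congr rfl fun l _ => by ring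
  linarith

section SymmetricFunctions

variable {β : Type*} [Fintype β] [DecidableEq β]

theorem sum_powersetCard_succ_sum_mem (k : ℕ) (F : Finset β → β → ℝ) :
    ∑ J ∈ powersetCard (k + 1) univ, ∑ j ∈ J, F J j
      = ∑ M ∈ powersetCard k univ, ∑ j ∈ univ \ M, F (insert j M) j := by
  rw [sum_sigma', sum_sigma']
  refine sum_nbij' (fun p => ⟨p.1.erase p.2, p.2⟩) (fun p => ⟨insert p.2 p.1, p.2⟩)
    ?_ ?_ ?_ ?_ ?_ <;>
    rintro ⟨J, j⟩ hp <;>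
    simp only [mem_sigma, mem_powersetCard_univ, Finset.mem_sdiff, Finset.mem_univ, true_and] at hp
  · simp [card_erase_of_mem hp.2, hp.1]
  · simp [card_insert_of_notMem hp.2, hp.1]
  · simp [insert_erase hp.2]
  · simp [erase_insert hp.2]
  · simp [insert_erase hp.2]

theorem sum_powersetCard_sum_mem_eq_zero {d : β → ℝ} (hd : ∑ j, d j = 0) :
    ∀ k, ∑ J ∈ powersetCard k univ, ∑ j ∈ J, d j = 0
  | 0 => by simp
  | k + 1 => by
    have hcompl (M : Finset β) : ∑ j ∈ univ \ M, d j = -∑ j ∈ M, d j := by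
      linarith [sum_sdiff (f := d) (subset_univ M)]
    rw [sum_powersetCard_succ_sum_mem, sum_congr rfl fun M _ => hcompl M, sum_neg_distrib,
      sum_powersetCard_sum_mem_eq_zero hd k, neg_zero]

theorem succ_mul_esymm_succ (s : β → ℝ) (k : ℕ) :
    (k + 1 : ℝ) * esymm s (k + 1)
      = ∑ M ∈ powersetCard k univ, (∏ j ∈ M, s j) * ∑ j ∈ univ \ M, s j := by
  have hsplit (J : Finset β) (hJ : J ∈ powersetCard (k + 1) univ) :
      (k + 1 : ℝ) * ∏ j ∈ J, s j = ∑ j ∈ J, (∏ i ∈ J.erase j, s i) * s j := by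
    rw [sum_congr rfl fun j hj => prod_erase_mul J s hj, sum_const, mem_powersetCard_univ.mp hJ,
      nsmul_eq_mul]
    push_cast; ring
  rw [esymm, mul_sum, sum_congr rfl hsplit, sum_powersetCard_succ_sum_mem]
  refine sum_congr rfl fun M _ => ?_
  rw [mul_sum]
  refine sum_congr rfl fun j hj => ?_
  rw [erase_insert (mem_sdiff.mp hj).2]

theorem sum_prod_mul_sum_sum_sub_nonneg (s : β → ℝ) (hs : ∀ j, 0 ≤ s j) :
    ∀ k, 0 ≤ ∑ J ∈ powersetCard k univ, (∏ j ∈ J, s j) * ∑ j ∈ J, ∑ l ∈ univ \ J, (s j - s l)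
  | 0 => by simp
  | k + 1 => by
    have hsplit (J : Finset β) :
        (∏ j ∈ J, s j) * ∑ j ∈ J, ∑ l ∈ univ \ J, (s j - s l)
          = ∑ j ∈ J, (∏ i ∈ J.erase j, s i) * (s j * ∑ l ∈ univ \ J, (s j - s l)) := by
      rw [mul_sum]
      refine sum_congr rfl fun j hj => ?_
      rw [← mul_assoc, prod_erase_mul J s hj]
    simp_rw [hsplit]
    rw [sum_powersetCard_succ_sum_mem]
    refine sum_nonneg fun M _ => ?_
    -- reindexed by `M = J.erase j`, each inner sum is the Chebyshev sum over the complement of `M`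
    have hcheb : ∑ j ∈ univ \ M, (∏ i ∈ (insert j M).erase j, s i)
          * (s j * ∑ l ∈ univ \ insert j M, (s j - s l))
        = (∏ i ∈ M, s i) * ∑ j ∈ univ \ M, ∑ l ∈ univ \ M, s j * (s j - s l) := by
      rw [mul_sum]
      refine sum_congr rfl fun j hj => ?_
      rw [erase_insert (Finset.mem_sdiff.mp hj).2, sdiff_insert, mul_sum,
        ← sum_erase_add _ _ hj, sub_self, mul_zero, add_zero]
    rw [hcheb]
    exact mul_nonneg (prod_nonneg fun i _ => hs i) (sum_sum_mul_sub_self_nonneg s _)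

theorem card_mul_succ_mul_esymm_succ_le (s : β → ℝ) (hs : ∀ j, 0 ≤ s j) (k : ℕ) :
    Fintype.card β * ((k + 1) * esymm s (k + 1))
      ≤ (Fintype.card β - k) * (∑ j, s j) * esymm s k := by
  set m := Fintype.card β
  set T := ∑ M ∈ powersetCard k univ, (∏ j ∈ M, s j) * ∑ j ∈ M, s j
  have hcompl (M : Finset β) : ∑ j ∈ univ \ M, s j = ∑ j, s j - ∑ j ∈ M, s j := by
    linarith [sum_sdiff (f := s) (subset_univ M)]
  have hstep : (k + 1) * esymm s (k + 1) = (∑ j, s j) * esymm s k - T := by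
    rw [succ_mul_esymm_succ, esymm, mul_sum, ← sum_sub_distrib]
    exact sum_congr rfl fun M _ => by rw [hcompl]; ring
  have hcross (M : Finset β) (hM : M ∈ powersetCard k univ) :
      ∑ j ∈ M, ∑ l ∈ univ \ M, (s j - s l) = m * ∑ j ∈ M, s j - k * ∑ j, s j := by
    have hk : #M = k := mem_powersetCard_univ.mp hM
    have hcard : (#(univ \ M) : ℝ) = m - k := by
      rw [card_univ_sdiff, Nat.cast_sub (card_le_univ M), hk]
    rw [sum_congr rfl fun j _ => by rw [sum_sub_distrib, sum_const, nsmul_eq_mul],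
      sum_sub_distrib, sum_const, nsmul_eq_mul, ← mul_sum, hcard, hcompl, hk]
    ring
  have hT : m * T - k * (∑ j, s j) * esymm s k
      = ∑ M ∈ powersetCard k univ, (∏ j ∈ M, s j) * ∑ j ∈ M, ∑ l ∈ univ \ M, (s j - s l) := by
    rw [esymm, mul_sum, mul_sum, ← sum_sub_distrib]
    exact sum_congr rfl fun M hM => by rw [hcross M hM]; ring
  rw [hstep]
  nlinarith [hT, sum_prod_mul_sum_sum_sub_nonneg s hs k]

/-- Maclaurin's inequality. -/
theorem card_pow_mul_esymm_le (s : β → ℝ) (hs : ∀ j, 0 ≤ s j) :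
    ∀ k, (Fintype.card β : ℝ) ^ k * esymm s k ≤ (Fintype.card β).choose k * (∑ j, s j) ^ k
  | 0 => by simp [esymm]
  | k + 1 => by
    set m := Fintype.card β
    set S := ∑ j, s j
    rcases lt_or_ge k m with hkm | hmk
    · have hS : 0 ≤ S := sum_nonneg fun j _ => hs j
      have hchoose : (m.choose (k + 1) : ℝ) * (k + 1) = m.choose k * (m - k) := by
        have := congrArg (Nat.cast : ℕ → ℝ) (Nat.choose_succ_right_eq m k)
        push_cast [Nat.cast_sub hkm.le] at this
        exact this
      have hmk : (0 : ℝ) ≤ m - k := sub_nonneg.mpr (by exact_mod_cast hkm.le)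
      refine le_of_mul_le_mul_left ?_ (by positivity : (0 : ℝ) < k + 1)
      calc (k + 1 : ℝ) * ((m : ℝ) ^ (k + 1) * esymm s (k + 1))
          = (m : ℝ) ^ k * (m * ((k + 1) * esymm s (k + 1))) := by ring
        _ ≤ (m : ℝ) ^ k * ((m - k) * S * esymm s k) :=
          mul_le_mul_of_nonneg_left (card_mul_succ_mul_esymm_succ_le s hs k) (by positivity)
        _ = (m - k) * S * ((m : ℝ) ^ k * esymm s k) := by ring
        _ ≤ (m - k) * S * (m.choose k * S ^ k) :=
          mul_le_mul_of_nonneg_left (card_pow_mul_esymm_le s hs k) (mul_nonneg hmk hS)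
        _ = (k + 1) * (m.choose (k + 1) * S ^ (k + 1)) := by
          linear_combination -(S ^ (k + 1)) * hchoose
    · have hempty : powersetCard (k + 1) (univ : Finset β) = ∅ :=
        powersetCard_eq_empty.mpr (by rw [card_univ]; omega)
      simp [esymm, hempty, Nat.choose_eq_zero_of_lt (Nat.lt_succ_of_le hmk)]

theorem abs_prod_add_sub_linear_le {ι : Type*} [DecidableEq ι] (J : Finset ι) (d : ι → ℝ)
    {a : ℝ} (ha : 1 ≤ a) (hd : ∀ j ∈ J, |d j| ≤ 1) :
    |∏ j ∈ J, (d j + a) - (a ^ #J + a ^ (#J - 1) * ∑ j ∈ J, d j)| ≤ 2 ^ #J * a ^ (#J - 2) := by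
  set f : Finset ι → ℝ := fun K => (∏ j ∈ K, d j) * a ^ (#J - #K)
  have hexpand : ∏ j ∈ J, (d j + a) = ∑ K ∈ J.powerset, f K := by
    rw [prod_add]
    exact sum_congr rfl fun K hK => by rw [prod_const, card_sdiff_of_subset (mem_powerset.mp hK)]
  have hsmall : J.powerset.filter (#· ≤ 1) = insert ∅ (J.image singleton) := by
    ext K
    simp only [mem_filter, mem_powerset, mem_insert, mem_image]
    constructor
    · rintro ⟨hKJ, hcard⟩
      rcases Nat.le_one_iff_eq_zero_or_eq_one.mp hcard with h0 | h1
      · exact Or.inl (card_eq_zero.mp h0)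
      · obtain ⟨x, rfl⟩ := card_eq_one.mp h1
        exact Or.inr ⟨x, hKJ (mem_singleton_self x), rfl⟩
    · rintro (rfl | ⟨j, hj, rfl⟩)
      · simp
      · exact ⟨singleton_subset_iff.mpr hj, by simp⟩
  have hlinear : ∑ K ∈ J.powerset.filter (#· ≤ 1), f K = a ^ #J + a ^ (#J - 1) * ∑ j ∈ J, d j := by
    rw [hsmall, sum_insert (by simp), sum_image fun _ _ _ _ h => singleton_injective h, mul_comm,
      sum_mul]
    simp [f]
  have hhigh (K : Finset ι) (hK : K ∈ J.powerset.filter (¬#· ≤ 1)) : |f K| ≤ a ^ (#J - 2) := by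
    rw [mem_filter, mem_powerset] at hK
    rw [abs_mul, abs_prod, abs_pow, abs_of_nonneg (by linarith)]
    calc (∏ j ∈ K, |d j|) * a ^ (#J - #K) ≤ 1 * a ^ (#J - 2) := by
          gcongr
          · exact prod_le_one (fun j _ => abs_nonneg _) fun j hj => hd j (hK.1 hj)
          · omega
      _ = a ^ (#J - 2) := one_mul _
  rw [hexpand, ← sum_filter_add_sum_filter_not J.powerset (#· ≤ 1), hlinear, add_sub_cancel_left]
  calc |∑ K ∈ J.powerset.filter (¬#· ≤ 1), f K|
      ≤ ∑ K ∈ J.powerset.filter (¬#· ≤ 1), |f K| := abs_sum_le_sum_abs _ _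
    _ ≤ ∑ _K ∈ J.powerset, a ^ (#J - 2) :=
      (sum_le_sum hhigh).trans (sum_le_sum_of_subset_of_nonneg (filter_subset _ _)
        fun _ _ _ => by positivity)
    _ = 2 ^ #J * a ^ (#J - 2) := by rw [sum_const, card_powerset, nsmul_eq_mul]; push_cast; ring

theorem choose_mul_pow_le_esymm_add (c : β → ℝ) {a : ℝ} (ha : 1 ≤ a) (hc : ∀ j, |c j - a| ≤ 1)
    (hsum : ∑ j, c j = Fintype.card β * a) (k : ℕ) :
    (Fintype.card β).choose k * a ^ k
      ≤ esymm c k + (Fintype.card β).choose k * 2 ^ k * a ^ (k - 2) := by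
  have hdev : ∑ j, (c j - a) = 0 := by simp [sum_sub_distrib, hsum]
  have hterm (J : Finset β) (hJ : J ∈ powersetCard k univ) :
      a ^ k - ∏ j ∈ J, c j
        ≤ 2 ^ k * a ^ (k - 2) - a ^ (k - 1) * ∑ j ∈ J, (c j - a) := by
    have := abs_le.mp (abs_prod_add_sub_linear_le J (fun j => c j - a) ha fun j _ => hc j)
    simp only [sub_add_cancel, mem_powersetCard_univ.mp hJ] at this
    linarith [this.1]
  have hlinear : ∑ J ∈ powersetCard k univ, a ^ (k - 1) * ∑ j ∈ J, (c j - a) = 0 := by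
    rw [← mul_sum, sum_powersetCard_sum_mem_eq_zero hdev, mul_zero]
  have := sum_le_sum hterm
  rw [sum_sub_distrib, sum_sub_distrib, hlinear, sum_const, sum_const, card_powersetCard,
    card_univ] at this
  simp only [nsmul_eq_mul, sub_zero] at this
  rw [esymm]
  linarith

theorem choose_mul_pow_le_one_add_mul_esymm (c : β → ℝ) {a : ℝ} {q : ℕ} (hq : 2 ≤ q)
    (ha : 0 < a) (hc : ∀ j, |c j - a| ≤ 1) (hsum : ∑ j, c j = Fintype.card β * a)
    (hE : 1 ≤ esymm c q) :
    (Fintype.card β).choose q * a ^ q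
      ≤ (1 + 4 ^ (q + 1) * ((Fintype.card β).choose q + 1) / a ^ 2) * esymm c q := by
  set C : ℝ := ((Fintype.card β).choose q : ℝ)
  set E := esymm c q
  have hC : 0 ≤ C := Nat.cast_nonneg _
  have h4 : (4 : ℝ) ^ (q + 1) = 4 * (2 ^ q * 2 ^ q) := by rw [pow_succ, ← mul_pow]; norm_num; ring
  rcases lt_or_ge a 2 with ha2 | ha2
  · have hK : 2 ^ q * C ≤ 4 ^ (q + 1) * (C + 1) / a ^ 2 := by
      rw [le_div_iff₀ (by positivity), h4]
      have ha4 : a ^ 2 ≤ 4 := by nlinarith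
      have hCle : C ≤ 2 ^ q * (C + 1) := by nlinarith [one_le_pow₀ (M₀ := ℝ) (n := q) one_le_two]
      calc 2 ^ q * C * a ^ 2 ≤ 2 ^ q * C * 4 := by gcongr
        _ = 4 * 2 ^ q * C := by ring
        _ ≤ 4 * 2 ^ q * (2 ^ q * (C + 1)) := by gcongr
        _ = 4 * (2 ^ q * 2 ^ q) * (C + 1) := by ring
    calc C * a ^ q ≤ C * 2 ^ q := by gcongr
      _ ≤ 4 ^ (q + 1) * (C + 1) / a ^ 2 * 1 := by linarith
      _ ≤ (1 + 4 ^ (q + 1) * (C + 1) / a ^ 2) * E := by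
        have : 0 ≤ 4 ^ (q + 1) * (C + 1) / a ^ 2 := by positivity
        nlinarith
  · have hlow : C * (a / 2) ^ q ≤ E := by
      calc C * (a / 2) ^ q = ∑ J ∈ powersetCard q (univ : Finset β), (a / 2) ^ q := by
            simp [C, card_powersetCard]
        _ ≤ E := sum_le_sum fun J hJ => by
          rw [← mem_powersetCard_univ.mp hJ, ← prod_const]
          exact prod_le_prod (fun _ _ => by positivity) fun j _ => by
            linarith [(abs_le.mp (hc j)).1]
    have herror : C * 2 ^ q * a ^ (q - 2) = C * (a / 2) ^ q * (4 ^ q / a ^ 2) := by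
      have : a ^ q = a ^ (q - 2) * a ^ 2 := by rw [← pow_add, Nat.sub_add_cancel hq]
      rw [div_pow, this, show (4 : ℝ) ^ q = 2 ^ q * 2 ^ q by rw [← mul_pow]; norm_num]
      field_simp
    have hK : 4 ^ q / a ^ 2 ≤ 4 ^ (q + 1) * (C + 1) / a ^ 2 := by
      gcongr
      rw [pow_succ]
      nlinarith [pow_pos (by norm_num : (0 : ℝ) < 4) q]
    calc C * a ^ q ≤ E + C * 2 ^ q * a ^ (q - 2) :=
          choose_mul_pow_le_esymm_add c (by linarith) hc hsum q
      _ ≤ E + E * (4 ^ (q + 1) * (C + 1) / a ^ 2) := by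
        rw [herror]
        gcongr
      _ = (1 + 4 ^ (q + 1) * (C + 1) / a ^ 2) * E := by ring

end SymmetricFunctions

section CompleteMultipartite

variable {V β : Type*} [Fintype V] [DecidableEq V] [DecidableEq β]

/-- The edges of the complete multipartite `q`-graph whose parts are the fibres of `r`. -/
def rainbowSets (r : V → β) (q : ℕ) : Finset (Finset V) :=
  (powersetCard q univ).filter fun e => Set.InjOn r e

theorem prod_sum_fiber_eq_sum_rainbow (r : V → β) (y : V → ℝ) (J : Finset β) :
    ∏ j ∈ J, ∑ i ∈ univ.filter (r · = j), y i
      = ∑ e ∈ univ.filter (fun e : Finset V => Set.InjOn r e ∧ e.image r = J), ∏ i ∈ e, y i := by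
  rw [← prod_coe_sort J, prod_univ_sum]
  -- a choice of one vertex in each part indexed by `J` is a rainbow set with colours `J`
  refine sum_bij (fun x _ => univ.image x) ?_ ?_ ?_ ?_
  · intro x hx
    have hrx (j : J) : r (x j) = j := (mem_filter.mp (Fintype.mem_piFinset.mp hx j)).2
    refine mem_filter.mpr ⟨mem_univ _, ?_, ?_⟩
    · simp only [coe_image, coe_univ, Set.image_univ]
      rintro _ ⟨j, rfl⟩ _ ⟨j', rfl⟩ h
      rw [hrx, hrx, ← Subtype.ext_iff] at h
      rw [h]
    · rw [image_image, show r ∘ x = Subtype.val from funext hrx, univ_eq_attach,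
        attach_image_val]
  · intro x hx x' hx' h
    have hrx (j : J) : r (x j) = j := (mem_filter.mp (Fintype.mem_piFinset.mp hx j)).2
    have hrx' (j : J) : r (x' j) = j := (mem_filter.mp (Fintype.mem_piFinset.mp hx' j)).2
    funext j
    obtain ⟨j', -, hj'⟩ := mem_image.mp (h ▸ mem_image_of_mem x (mem_univ j))
    obtain rfl : j' = j := Subtype.ext (by rw [← hrx' j', hj', hrx])
    exact hj'.symm
  · intro e he
    obtain ⟨hinj, himage⟩ := (mem_filter.mp he).2
    have hex (j : J) : ∃ i ∈ e, r i = j := mem_image.mp (himage ▸ j.2)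
    choose x hxe hrx using hex
    refine ⟨x, Fintype.mem_piFinset.mpr fun j => mem_filter.mpr ⟨mem_univ _, hrx j⟩, ?_⟩
    ext i
    refine ⟨fun hi => ?_, fun hi => ?_⟩
    · obtain ⟨j, -, rfl⟩ := mem_image.mp hi
      exact hxe j
    · have hj : r i ∈ J := himage ▸ mem_image_of_mem r hi
      exact mem_image.mpr ⟨⟨r i, hj⟩, mem_univ _, hinj (hxe _) hi (hrx _)⟩
  · intro x hx
    have hrx (j : J) : r (x j) = j := (mem_filter.mp (Fintype.mem_piFinset.mp hx j)).2
    rw [prod_image fun j _ j' _ h => Subtype.ext (by rw [← hrx j, ← hrx j', h])]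

theorem sum_rainbowSets_prod [Fintype β] (r : V → β) (y : V → ℝ) (q : ℕ) :
    ∑ e ∈ rainbowSets r q, ∏ i ∈ e, y i = esymm (fun j => ∑ i ∈ univ.filter (r · = j), y i) q := by
  have hmaps (e : Finset V) (he : e ∈ rainbowSets r q) : e.image r ∈ powersetCard q univ := by
    obtain ⟨hcard, hinj⟩ := mem_filter.mp he
    rw [mem_powersetCard_univ, card_image_of_injOn hinj, mem_powersetCard_univ.mp hcard]
  have hfiber (J : Finset β) (hJ : J ∈ powersetCard q univ) :
      (rainbowSets r q).filter (·.image r = J)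
        = univ.filter (fun e : Finset V => Set.InjOn r e ∧ e.image r = J) := by
    ext e
    simp only [rainbowSets, mem_filter, mem_powersetCard_univ, mem_univ, true_and]
    refine ⟨fun h => ⟨h.1.2, h.2⟩, fun h => ⟨⟨?_, h.1⟩, h.2⟩⟩
    rw [← card_image_of_injOn h.1, h.2, mem_powersetCard_univ.mp hJ]
  rw [← sum_fiberwise_of_maps_to hmaps, esymm]
  exact sum_congr rfl fun J hJ => by rw [hfiber J hJ, prod_sum_fiber_eq_sum_rainbow]

end CompleteMultipartite

theorem card_filter_ofNat_eq (m n : ℕ) [NeZero m] (j : Fin m) :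
    #(univ.filter fun i : Fin n => Fin.ofNat m i = j)
      = n / m + if (j : ℕ) < n % m then 1 else 0 := by
  have hmod (i : ℕ) : Fin.ofNat m i = j ↔ i ≡ j [MOD m] := by
    rw [Fin.ext_iff, Fin.val_ofNat, Nat.ModEq, Nat.mod_eq_of_lt j.2]
  have hcount := Nat.count_modEq_card n (NeZero.pos m) j
  rw [Nat.mod_eq_of_lt j.2] at hcount
  simp_rw [hmod]
  rw [← hcount, Nat.count_eq_card_filter_range, card_filter, card_filter]
  exact Fin.sum_univ_eq_sum_range (fun k => if k ≡ j [MOD m] then 1 else 0) n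

theorem abs_card_filter_ofNat_sub_le (m n : ℕ) [NeZero m] (j : Fin m) :
    |(#(univ.filter fun i : Fin n => Fin.ofNat m i = j) : ℝ) - n / m| ≤ 1 := by
  have hm : (0 : ℝ) < m := by exact_mod_cast NeZero.pos m
  have hfloor : ((n / m : ℕ) : ℝ) ≤ n / m := Nat.cast_div_le
  have hceil : (n / m : ℝ) < (n / m : ℕ) + 1 := by
    rw [div_lt_iff₀ hm]
    have : n < (n / m + 1) * m := by rw [add_one_mul]; exact Nat.lt_div_mul_add (NeZero.pos m)
    exact_mod_cast this
  rw [card_filter_ofNat_eq, abs_le]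
  split_ifs <;> push_cast <;> constructor <;> linarith

theorem TuranHG_edges (m q n : ℕ) [NeZero m] :
    (TuranHG m q n).edges = rainbowSets (fun i : Fin n => Fin.ofNat m i) q := by
  refine filter_congr fun e _ => forall₂_congr fun v _ => forall₂_congr fun w _ => ?_
  simp only [Fin.ext_iff, Fin.val_ofNat]

theorem sum_card_filter_ofNat (m n : ℕ) [NeZero m] :
    ∑ j : Fin m, (#(univ.filter fun i : Fin n => Fin.ofNat m i = j) : ℝ) = n := by
  rw [← Nat.cast_sum, ← card_eq_sum_card_fiberwise fun i _ => mem_univ _, card_univ,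
    Fintype.card_fin]

theorem card_TuranHG_edges_eq_esymm (m q n : ℕ) [NeZero m] :
    (#(TuranHG m q n).edges : ℝ)
      = esymm (fun j : Fin m => (#(univ.filter fun i : Fin n => Fin.ofNat m i = j) : ℝ)) q := by
  have := sum_rainbowSets_prod (fun i : Fin n => Fin.ofNat m i) (fun _ => (1 : ℝ)) q
  simp only [prod_const_one, sum_const, nsmul_eq_mul, mul_one] at this
  rw [TuranHG_edges]
  exact this

theorem rpow_neg_one_div_pow {x : ℝ} (hx : 0 ≤ x) (α : ℝ) (q : ℕ) :
    (x ^ (-1 / α)) ^ q = x ^ (-(q : ℝ) / α) := by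
  rw [← Real.rpow_natCast, ← Real.rpow_mul hx]
  ring_nf

section SpectralRadius

variable {α : ℝ} {q n : ℕ}

theorem abs_le_one_of_mem_simplex (hα : 0 < α) {x : Fin n → ℝ} (hx : x ∈ simplex α n) (i : Fin n) :
    |x i| ≤ 1 := by
  by_contra! h
  have hi : |x i| ^ α ≤ ∑ j, |x j| ^ α :=
    single_le_sum (fun j _ => Real.rpow_nonneg (abs_nonneg (x j)) α) (mem_univ i)
  linarith [Real.one_lt_rpow h hα, show ∑ j, |x j| ^ α = 1 from hx]

theorem bddAbove_lagPolyEdge_image_simplex (hα : 0 < α) (H : RGraph q n) :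
    BddAbove (lagPolyEdge H '' simplex α n) := by
  refine ⟨q.factorial * #H.edges, ?_⟩
  rintro _ ⟨x, hx, rfl⟩
  rw [lagPolyEdge, mul_le_mul_iff_right₀ (by positivity), ← nsmul_one, ← sum_const]
  refine sum_le_sum fun e _ => ?_
  calc ∏ i ∈ e, x i ≤ |∏ i ∈ e, x i| := le_abs_self _
    _ = ∏ i ∈ e, |x i| := abs_prod e x
    _ ≤ 1 := prod_le_one (fun i _ => abs_nonneg _) fun i _ => abs_le_one_of_mem_simplex hα hx i

theorem specRadEdge_le {H : RGraph q n} {B : ℝ} (hB : 0 ≤ B)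
    (h : ∀ x ∈ simplex α n, lagPolyEdge H x ≤ B) : specRadEdge α H ≤ B :=
  Real.sSup_le (by rintro _ ⟨x, hx, rfl⟩; exact h x hx) hB

theorem specRadEdge_eq_zero_of_edges_eq_empty {H : RGraph q n} (hE : H.edges = ∅) :
    specRadEdge α H = 0 := by
  have hzero (x : Fin n → ℝ) : lagPolyEdge H x = 0 := by simp [lagPolyEdge, hE]
  refine le_antisymm (specRadEdge_le le_rfl fun x _ => (hzero x).le) (Real.sSup_nonneg ?_)
  rintro _ ⟨x, -, rfl⟩
  exact (hzero x).ge

theorem mul_card_mul_rpow_le_specRadEdge (hα : 0 < α) (hn : 0 < n) (H : RGraph q n) :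
    q.factorial * #H.edges * (n : ℝ) ^ (-(q : ℝ) / α) ≤ specRadEdge α H := by
  have hn' : (0 : ℝ) < n := by exact_mod_cast hn
  set u : ℝ := (n : ℝ) ^ (-1 / α)
  have hu : 0 < u := Real.rpow_pos_of_pos hn' _
  have hmem : (fun _ => u) ∈ simplex α n := by
    show ∑ _i : Fin n, |u| ^ α = 1
    rw [abs_of_pos hu, ← Real.rpow_mul hn'.le, div_mul_cancel₀ _ hα.ne', Real.rpow_neg_one,
      sum_const, card_univ, Fintype.card_fin, nsmul_eq_mul, mul_inv_cancel₀ hn'.ne']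
  have hval : lagPolyEdge H (fun _ => u) = q.factorial * #H.edges * (n : ℝ) ^ (-(q : ℝ) / α) := by
    rw [lagPolyEdge, sum_congr rfl fun e he => by rw [prod_const, H.card_eq e he],
      sum_const, nsmul_eq_mul, rpow_neg_one_div_pow hn'.le, mul_assoc]
  rw [← hval]
  exact le_csSup (bddAbove_lagPolyEdge_image_simplex hα H) ⟨_, hmem, rfl⟩

theorem sum_abs_le_of_mem_simplex (hα : 1 ≤ α) {x : Fin n → ℝ} (hx : x ∈ simplex α n) :
    ∑ i, |x i| ≤ n * (n : ℝ) ^ (-1 / α) := by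
  rcases n.eq_zero_or_pos with rfl | hn
  · simp
  have hn' : (0 : ℝ) < n := by exact_mod_cast hn
  have hα0 : 0 < α := by linarith
  have hpow : (∑ i, |x i|) ^ α ≤ (n * (n : ℝ) ^ (-1 / α)) ^ α := by
    have := Real.rpow_sum_le_const_mul_sum_rpow_of_nonneg univ hα fun i _ => abs_nonneg (x i)
    rw [show ∑ i, |x i| ^ α = 1 from hx, mul_one, card_univ, Fintype.card_fin] at this
    rwa [Real.mul_rpow hn'.le (by positivity), ← Real.rpow_mul hn'.le, div_mul_cancel₀ _ hα0.ne',
      ← Real.rpow_add hn', ← sub_eq_add_neg]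
  exact (Real.rpow_le_rpow_iff (by positivity) (by positivity) hα0).mp hpow

end SpectralRadius

theorem lagPolyEdge_le_of_edges_eq_rainbowSets {q n m : ℕ} [NeZero m] {H : RGraph q n}
    (r : Fin n → Fin m) (hH : H.edges = rainbowSets r q) (x : Fin n → ℝ) :
    lagPolyEdge H x ≤ q.factorial * m.choose q * ((∑ i, |x i|) / m) ^ q := by
  set y : Fin m → ℝ := fun j => ∑ i ∈ univ.filter (r · = j), |x i|
  have hmaclaurin := card_pow_mul_esymm_le y (fun j => sum_nonneg fun i _ => abs_nonneg (x i)) q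
  rw [Fintype.card_fin, sum_fiberwise univ r] at hmaclaurin
  rw [lagPolyEdge, mul_assoc]
  gcongr
  calc ∑ e ∈ H.edges, ∏ i ∈ e, x i ≤ ∑ e ∈ H.edges, ∏ i ∈ e, |x i| :=
        sum_le_sum fun e _ => (le_abs_self _).trans (abs_prod e x).le
    _ = esymm y q := by rw [hH]; exact sum_rainbowSets_prod r _ q
    _ ≤ m.choose q * ((∑ i, |x i|) / m) ^ q := by
      rw [div_pow, mul_div_assoc', le_div_iff₀ (pow_pos (by exact_mod_cast NeZero.pos m) q)]
      linarith

theorem specRadEdge_TuranHG_le {α : ℝ} (hα : 1 ≤ α) (m q n : ℕ) [NeZero m] :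
    specRadEdge α (TuranHG m q n)
      ≤ q.factorial * m.choose q * ((n : ℝ) / m) ^ q * (n : ℝ) ^ (-(q : ℝ) / α) := by
  refine specRadEdge_le (by positivity) fun x hx =>
    (lagPolyEdge_le_of_edges_eq_rainbowSets _ (TuranHG_edges m q n) x).trans ?_
  calc q.factorial * m.choose q * ((∑ i, |x i|) / m) ^ q
      ≤ q.factorial * m.choose q * (n * (n : ℝ) ^ (-1 / α) / m) ^ q := by
        gcongr
        exact sum_abs_le_of_mem_simplex hα hx
    _ = q.factorial * m.choose q * ((n : ℝ) / m) ^ q * (n : ℝ) ^ (-(q : ℝ) / α) := by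
        rw [mul_div_right_comm, mul_pow, rpow_neg_one_div_pow (Nat.cast_nonneg n)]
        ring

/-- **Lemma: estimate for the `α`-spectral radius of the balanced complete
`m`-partite `q`-graph.** -/
theorem specRad_TuranHG_estimate {m q : ℕ} (hq : 2 ≤ q) (hm : q ≤ m)
    {α : ℝ} (hα : 1 < α) :
    ∃ C : ℝ, ∀ n : ℕ,
      (q.factorial : ℝ) * ((TuranHG m q n).edges.card : ℝ) * (n : ℝ) ^ (-(q : ℝ) / α)
          ≤ specRadEdge α (TuranHG m q n) ∧
      specRadEdge α (TuranHG m q n)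
          ≤ (1 + C / (n : ℝ) ^ 2) *
            ((q.factorial : ℝ) * ((TuranHG m q n).edges.card : ℝ) *
              (n : ℝ) ^ (-(q : ℝ) / α)) := by
  have : NeZero m := ⟨by omega⟩
  refine ⟨4 ^ (q + 1) * (m.choose q + 1) * m ^ 2, fun n => ?_⟩
  rcases (TuranHG m q n).edges.eq_empty_or_nonempty with hE | ⟨e, he⟩
  · simp [specRadEdge_eq_zero_of_edges_eq_empty hE, hE]
  obtain ⟨i, -⟩ := card_pos.mp (by rw [(TuranHG m q n).card_eq e he]; omega : 0 < #e)
  have hn : (0 : ℝ) < n := by exact_mod_cast i.pos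
  set c : Fin m → ℝ := fun j => #(univ.filter fun i : Fin n => Fin.ofNat m i = j)
  have hcard : (#(TuranHG m q n).edges : ℝ) = esymm c q := card_TuranHG_edges_eq_esymm m q n
  have hsum : ∑ j, c j = m * (n / m : ℝ) := by
    rw [mul_div_cancel₀ _ (NeZero.ne (m : ℝ)), sum_card_filter_ofNat]
  have hbalanced := choose_mul_pow_le_one_add_mul_esymm c hq
    (div_pos hn (by exact_mod_cast NeZero.pos m))
    (abs_card_filter_ofNat_sub_le m n) (by rwa [Fintype.card_fin])
    (by rw [← hcard]; exact_mod_cast card_pos.mpr ⟨e, he⟩)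
  rw [Fintype.card_fin] at hbalanced
  refine ⟨mul_card_mul_rpow_le_specRadEdge (by linarith) i.pos _, ?_⟩
  calc specRadEdge α (TuranHG m q n)
      ≤ q.factorial * (m.choose q * ((n : ℝ) / m) ^ q) * (n : ℝ) ^ (-(q : ℝ) / α) := by
        rw [← mul_assoc]; exact specRadEdge_TuranHG_le hα.le m q n
    _ ≤ q.factorial * ((1 + 4 ^ (q + 1) * (m.choose q + 1) / (n / m : ℝ) ^ 2) * esymm c q)
          * (n : ℝ) ^ (-(q : ℝ) / α) := by gcongr
    _ = _ := by rw [hcard, div_pow, div_div_eq_mul_div]; ring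
end

section
/- Let $\alpha > 1$ be a real number, $Q$ be an $r$-graph on $q$ vertices, and $\mathcal{H}$ be an $r$-graph on vertex set $[n]$. If $\mathbf{x} = (x_1,\ldots,x_n)$ is a nonnegative vector in $\mathrm{OPT}_{\alpha,Q}(\mathcal{H})$, then for every $i \in [n]$, $\partial_i P_{Q,\mathcal{H}}(x_1,\ldots,x_n) = q \cdot \lambda_{\alpha,Q}(\mathcal{H}) \cdot x_i^{\alpha - 1}$. -/
/-!
At a maximiser `x` of `P = P_{Q,H}` on the level set `{∑ |y_j|^α = 1}`, the Lagrange multiplier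
rule gives `a • g' + b • P' = 0` for the constraint `g y = ∑ |y_j|^α` and some `(a, b) ≠ 0`.
Both `P` (degree `q`) and `g` (degree `α`) are positively homogeneous, so Euler's identity
evaluates the two derivatives at `x` itself: `P' x = q λ` and `g' x = α`. This forces `b ≠ 0` and
pins the multiplier down, `P' = (q λ / α) • g'`; for nonnegative `x` the `i`-th partial of `g` is
`α x_i^(α-1)`.
-/

open scoped Classical
open Finset Filter Real

section Homogeneous

variable {E : Type*} [NormedAddCommGroup E] [NormedSpace ℝ E]

theorem HasFDerivAt.apply_self_of_homogeneous {f : E → ℝ} {f' : E →L[ℝ] ℝ} {x : E} {p : ℝ}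
    (hf : HasFDerivAt f f' x) (hhom : ∀ t > 0, f (t • x) = t ^ p * f x) :
    f' x = p * f x := by
  have hray : HasDerivAt (fun t : ℝ => f (t • x)) (f' x) 1 := by
    have hline : HasDerivAt (fun t : ℝ => t • x) x 1 := by
      simpa using (hasDerivAt_id (1 : ℝ)).smul_const x
    exact (one_smul ℝ x ▸ hf).comp_hasDerivAt 1 hline
  have hpow : HasDerivAt (fun t : ℝ => t ^ p * f x) (p * f x) 1 := by
    simpa using (Real.hasDerivAt_rpow_const (p := p) (Or.inl one_ne_zero)).mul_const (f x)
  have heq : (fun t : ℝ => t ^ p * f x) =ᶠ[nhds 1] fun t => f (t • x) :=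
    Filter.mem_of_superset (Ioi_mem_nhds one_pos) fun t ht => (hhom t ht).symm
  exact hray.unique (hpow.congr_of_eventuallyEq heq.symm)

variable [CompleteSpace E]

theorem IsLocalExtrOn.eq_smul_of_homogeneous {f g : E → ℝ} {f' g' : E →L[ℝ] ℝ} {x : E} {p s : ℝ}
    (hextr : IsLocalExtrOn f {y | g y = g x} x) (hf : HasStrictFDerivAt f f' x)
    (hg : HasStrictFDerivAt g g' x) (hfhom : ∀ t > 0, f (t • x) = t ^ p * f x)
    (hghom : ∀ t > 0, g (t • x) = t ^ s * g x) (hgx : s * g x ≠ 0) :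
    f' = (p * f x / (s * g x)) • g' := by
  obtain ⟨a, b, hab, hcomb⟩ := hextr.exists_multipliers_of_hasStrictFDerivAt_1d hg hf
  have hcomb_apply (v : E) : a * g' v + b * f' v = 0 := by
    simpa using congrArg (fun L : E →L[ℝ] ℝ => L v) hcomb
  have hat_x : a * (s * g x) + b * (p * f x) = 0 := by
    rw [← hf.hasFDerivAt.apply_self_of_homogeneous hfhom,
      ← hg.hasFDerivAt.apply_self_of_homogeneous hghom]
    exact hcomb_apply x
  have hb : b ≠ 0 := by
    rintro rfl
    have ha : a = 0 := by simpa [hgx] using hat_x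
    exact hab (by simp [ha])
  ext v
  have hv := hcomb_apply v
  rw [smul_apply, smul_eq_mul, div_mul_eq_mul_div, eq_div_iff hgx]
  refine mul_left_cancel₀ hb ?_
  linear_combination (s * g x) * hv - g' v * hat_x

end Homogeneous

section Lagrangian

variable {r a n : ℕ}

theorem contDiff_lagPoly (Q : RGraph r a) (H : RGraph r n) : ContDiff ℝ ⊤ (lagPoly Q H) := by
  unfold lagPoly
  fun_prop

theorem lagPoly_smul (Q : RGraph r a) (H : RGraph r n) (t : ℝ) (x : Fin n → ℝ) :
    lagPoly Q H (t • x) = t ^ a * lagPoly Q H x := by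
  rw [lagPoly, lagPoly, Finset.mul_sum]
  refine Finset.sum_congr rfl fun φ hφ => ?_
  have hcard : (Finset.univ.image φ).card = a := by
    rw [Finset.card_image_of_injective _ (Finset.mem_filter.mp hφ).2.1, Finset.card_fin]
  simp only [Pi.smul_apply, smul_eq_mul, Finset.prod_mul_distrib, Finset.prod_const, hcard]

end Lagrangian

section PowerSum

variable {n : ℕ} {α : ℝ}

theorem sum_abs_rpow_smul {t : ℝ} (ht : 0 < t) (x : Fin n → ℝ) :
    ∑ j, |(t • x) j| ^ α = t ^ α * ∑ j, |x j| ^ α := by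
  simp only [Pi.smul_apply, smul_eq_mul, abs_mul, abs_of_pos ht,
    Real.mul_rpow ht.le (abs_nonneg _), Finset.mul_sum]

theorem hasStrictFDerivAt_sum_abs_rpow (hα : 1 < α) (x : Fin n → ℝ) :
    HasStrictFDerivAt (fun y : Fin n → ℝ => ∑ j, |y j| ^ α)
      (∑ j, (α * |x j| ^ (α - 2) * x j) •
        ContinuousLinearMap.proj (R := ℝ) (φ := fun _ : Fin n => ℝ) j) x := by
  refine HasStrictFDerivAt.fun_sum fun j _ => ?_
  have hsmooth : ContDiff ℝ 1 fun s : ℝ => |s| ^ α := by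
    simpa only [Real.norm_eq_abs] using contDiff_norm_rpow (E := ℝ) hα
  exact (hsmooth.contDiffAt.hasStrictDerivAt' (hasDerivAt_abs_rpow (x j) hα)
    one_ne_zero).comp_hasStrictFDerivAt x (hasStrictFDerivAt_apply (𝕜 := ℝ) j x)

theorem isCompact_simplex (hα : 0 < α) : IsCompact (simplex α n) := by
  have hcont : Continuous fun y : Fin n → ℝ => ∑ j, |y j| ^ α :=
    continuous_finsetSum _ fun j _ => (continuous_apply j).abs.rpow_const fun _ => Or.inr hα.le
  refine Metric.isCompact_of_isClosed_isBounded (isClosed_eq hcont continuous_const) ?_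
  refine (Metric.isBounded_closedBall (x := 0) (r := 1)).subset fun y hy => ?_
  rw [Metric.mem_closedBall, dist_zero_right, pi_norm_le_iff_of_nonneg zero_le_one]
  intro j
  have hle : |y j| ^ α ≤ 1 := (hy : ∑ j, |y j| ^ α = 1) ▸
    Finset.single_le_sum (f := fun k => |y k| ^ α) (fun k _ => by positivity) (Finset.mem_univ j)
  by_contra! hgt
  exact (Real.one_lt_rpow hgt hα).not_ge hle

end PowerSum

theorem isMaxOn_of_mem_OPT {r a n : ℕ} {α : ℝ} (hα : 0 < α) {Q : RGraph r a} {H : RGraph r n}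
    {x : Fin n → ℝ} (hx : x ∈ OPT α Q H) : IsMaxOn (lagPoly Q H) (simplex α n) x := fun y hy =>
  hx.2 ▸ le_csSup ((isCompact_simplex hα).image (contDiff_lagPoly Q H).continuous).bddAbove
    ⟨y, hy, rfl⟩

/-- **Lemma (Lagrange multiplier identity):** for a nonnegative optimal vector `x`,
the `i`-th partial derivative of the Lagrangian `Q`-polynomial at `x` equals
`q ⬝ λ_{α,Q}(H) ⬝ x_i^{α-1}`. -/
theorem lagrange_multiplier {r q n : ℕ} {α : ℝ} (hα : 1 < α)
    (Q : RGraph r q) (H : RGraph r n)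
    (x : Fin n → ℝ) (hx : x ∈ OPT α Q H) (hnn : ∀ i, 0 ≤ x i) :
    ∀ i : Fin n,
      fderiv ℝ (lagPoly Q H) x (Pi.single i 1)
        = q * specRad α Q H * x i ^ (α - 1) := by
  intro i
  have hsum : ∑ j, |x j| ^ α = 1 := hx.1
  have hP := (contDiff_lagPoly Q H).contDiffAt.hasStrictFDerivAt (x := x) (by simp)
  have hextr : IsLocalExtrOn (lagPoly Q H) {y | ∑ j, |y j| ^ α = ∑ j, |x j| ^ α} x := by
    rw [hsum]
    exact .inr (isMaxOn_of_mem_OPT (by linarith) hx).localize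
  have hmult := hextr.eq_smul_of_homogeneous hP (hasStrictFDerivAt_sum_abs_rpow hα x)
    (fun t _ => by rw [lagPoly_smul, Real.rpow_natCast]) (fun t ht => sum_abs_rpow_smul ht x)
    (by rw [hsum]; positivity)
  have hpartial : |x i| ^ (α - 2) * x i = x i ^ (α - 1) := by
    rcases (hnn i).eq_or_lt with h | h
    · rw [← h, mul_zero, Real.zero_rpow (by linarith)]
    · rw [abs_of_pos h, ← Real.rpow_add_one h.ne']
      ring_nf
  rw [hmult]
  simp only [hx.2, hsum, mul_one, mul_assoc, smul_apply, _root_.sum_apply,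
    ContinuousLinearMap.proj_apply, Pi.single_apply, smul_eq_mul, mul_ite, mul_zero, sum_ite_eq',
    mem_univ, ↓reduceIte, hpartial]
  field_simp
end

section
/- Let $q \ge r \ge 2$ be integers, $\alpha > 1$ and $\delta > 0$ real numbers, $Q$ an $r$-graph on $q$ vertices, $\mathcal{F}$ a family of $r$-graphs with $\hat{\pi} := \hat{\pi}(Q,\mathcal{F}) > 0$, and $\mathfrak{H}$ a hereditary family of $\mathcal{F}$-free $r$-graphs. Suppose that $\mathcal{F}$ is $(\delta, N, Q)$-smooth and $\mathfrak{H}$ is $(\alpha, \delta, N, Q, \mathcal{F})$-balanced in spectral for some integer $N$. Then there exists $N_1$ such that for every $n \ge N_1$, writing $\mu_n := \lambda_{\alpha,Q}(n,\mathfrak{H})$, one has $\big|\mu_n - \mu_{n-1} - \tfrac{q(\alpha-1)}{\alpha}\hat{\pi}\, n^{q - q/\alpha - 1}\big| \le 5\delta\, n^{q - q/\alpha - 1}$. -/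
open scoped Classical
open Finset Filter Real

/-- A family of `r`-graphs: for each number of vertices, a set of `r`-graphs. -/
def Family (r : ℕ) : Type := ∀ n : ℕ, Set (RGraph r n)

/-- `H` is `F`-free: it contains no member of `F` as a subgraph. -/
def FFree {r n : ℕ} (F : Family r) (H : RGraph r n) : Prop :=
  ∀ m : ℕ, ∀ G ∈ F m, Inj G H = ∅

/-- `inj(n,Q,F)`: the maximum of `inj(Q,H)` over `F`-free `H` on `n` vertices. -/
noncomputable def injNum {r q : ℕ} (Q : RGraph r q) (F : Family r) (n : ℕ) : ℕ :=
  sSup {k | ∃ H : RGraph r n, FFree F H ∧ k = (Inj Q H).card}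

/-- `spex_α(n,Q,F)`: the maximum `(α,Q)`-spectral radius of an `F`-free `r`-graph on
`n` vertices. -/
noncomputable def spex (α : ℝ) {r q : ℕ} (Q : RGraph r q) (F : Family r) (n : ℕ) : ℝ :=
  sSup {y | ∃ H : RGraph r n, FFree F H ∧ y = specRad α Q H}

/-- A family is hereditary if it is closed under taking subgraphs (any `r`-graph which
embeds into a member is a member). -/
def Hereditary {r : ℕ} (HH : Family r) : Prop :=
  ∀ (n m : ℕ) (H : RGraph r n) (G : RGraph r m),
    H ∈ HH n → (Inj G H).Nonempty → G ∈ HH m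

/-- `λ_{α,Q}(n, 𝔥)`. -/
noncomputable def famSpec (α : ℝ) {r q : ℕ} (Q : RGraph r q) (HH : Family r) (n : ℕ) : ℝ :=
  sSup {y | ∃ H ∈ HH n, y = specRad α Q H}

/-- The `Q`-degree of a vertex. -/
noncomputable def qDeg {r q n : ℕ} (Q : RGraph r q) (H : RGraph r n) (v : Fin n) : ℕ :=
  ((Inj Q H).filter fun φ => ∃ u, φ u = v).card

/-- The minimum `Q`-degree. -/
noncomputable def minQDeg {r q n : ℕ} (Q : RGraph r q) (H : RGraph r n) : ℕ :=
  sInf (Set.range (qDeg Q H))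

/-- `F` is `(δ, N, Q)`-smooth (relative to a given value `hatpi` of `π̂(Q,F)`). -/
def SmoothFam {r q : ℕ} (Q : RGraph r q) (F : Family r) (hatpi δ : ℝ) (N : ℕ) : Prop :=
  ∀ n : ℕ, N ≤ n →
    |(injNum Q F n : ℝ) - (injNum Q F (n - 1) : ℝ) - q * hatpi * (n : ℝ) ^ (q - 1)|
      ≤ δ * (n : ℝ) ^ (q - 1)

/-- `F` is `(δ, N, Q)`-degree stable with respect to `HH`. -/
def DegStable {r q : ℕ} (Q : RGraph r q) (F HH : Family r) (hatpi δ : ℝ) (N : ℕ) : Prop :=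
  ∀ n : ℕ, N ≤ n → ∀ H : RGraph r n, FFree F H →
    (1 - δ) * q * hatpi * (n : ℝ) ^ (q - 1) ≤ (minQDeg Q H : ℝ) → H ∈ HH n

/-- `HH` is `(α, δ, N, Q, F)`-balanced in spectral. -/
def BalancedSpec (α : ℝ) {r q : ℕ} (Q : RGraph r q) (F HH : Family r) (δ : ℝ) (N : ℕ) :
    Prop :=
  ∀ n : ℕ, N ≤ n →
    |famSpec α Q HH n - (injNum Q F n : ℝ) / (n : ℝ) ^ ((q : ℝ) / α)|
      ≤ δ * (n : ℝ) ^ ((q : ℝ) - q / α - 1)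

open scoped Topology

/-! The proof writes `μ_n ≈ inj(n)/n^{q/α}` (balance) and differentiates this quotient: the
numerator grows by `q π̂ n^{q-1}` (smoothness), while the denominator contributes
`inj(n-1) ((n-1)^{-q/α} - n^{-q/α}) ≈ (q/α) π̂ n^{q-q/α-1}`, since `x ↦ x^{-q/α}` has
derivative `-(q/α) x^{-q/α-1}`. Each of the four approximations costs at most `δ n^{q-q/α-1}`,
except the balance at `n - 1`, which costs at most twice that. -/

lemma tendsto_natCast_pred_div_natCast :
    Tendsto (fun n : ℕ => ((n - 1 : ℕ) : ℝ) / n) atTop (𝓝[≠] 1) := by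
  have hlim : Tendsto (fun n : ℕ => 1 - 1 / (n : ℝ)) atTop (𝓝 1) := by
    simpa using (tendsto_const_nhds (x := (1 : ℝ))).sub tendsto_one_div_atTop_nhds_zero_nat
  refine tendsto_nhdsWithin_iff.2 ⟨hlim.congr' ?_, ?_⟩ <;>
    filter_upwards [eventually_ge_atTop 1] with n hn
  · have hn0 : (n : ℝ) ≠ 0 := by positivity
    rw [Nat.cast_sub hn, Nat.cast_one]
    field_simp
  · have hn0 : (0 : ℝ) < n := by exact_mod_cast hn
    rw [Set.mem_compl_singleton_iff, Ne, div_eq_one_iff_eq hn0.ne', Nat.cast_sub hn]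
    simp

lemma tendsto_natCast_pred_rpow_div_rpow (t : ℝ) :
    Tendsto (fun n : ℕ => ((n - 1 : ℕ) : ℝ) ^ t / (n : ℝ) ^ t) atTop (𝓝 1) := by
  have h := (tendsto_nhdsWithin_iff.1 tendsto_natCast_pred_div_natCast).1.rpow_const
    (p := t) (Or.inl one_ne_zero)
  rw [one_rpow] at h
  exact h.congr fun n => div_rpow (Nat.cast_nonneg _) (Nat.cast_nonneg _) t

lemma tendsto_rpow_sub_natCast_pred_rpow_div (t : ℝ) :
    Tendsto (fun n : ℕ => ((n : ℝ) ^ t - ((n - 1 : ℕ) : ℝ) ^ t) / (n : ℝ) ^ (t - 1))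
      atTop (𝓝 t) := by
  have hderiv : HasDerivAt (fun x : ℝ => x ^ t) t 1 := by
    simpa using hasDerivAt_rpow_const (p := t) (x := 1) (Or.inl one_ne_zero)
  refine ((hasDerivAt_iff_tendsto_slope.1 hderiv).comp
    tendsto_natCast_pred_div_natCast).congr' ?_
  filter_upwards [eventually_ge_atTop 1] with n hn
  have hn0 : (0 : ℝ) < n := by exact_mod_cast hn
  rw [Function.comp_apply, slope_def_field, one_rpow, Nat.cast_sub hn, Nat.cast_one,
    div_rpow (by linarith [show (1 : ℝ) ≤ n by exact_mod_cast hn]) hn0.le, rpow_sub_one hn0.ne']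
  field_simp
  ring

lemma tendsto_div_natCast_pred_rpow_sub_div_rpow {a : ℕ → ℝ} {c : ℝ} {q : ℕ}
    (h : Tendsto (fun n : ℕ => a n / (n : ℝ) ^ q) atTop (𝓝 c)) (s : ℝ) :
    Tendsto (fun n : ℕ => (a (n - 1) / ((n - 1 : ℕ) : ℝ) ^ s - a (n - 1) / (n : ℝ) ^ s)
      / (n : ℝ) ^ ((q : ℝ) - s - 1)) atTop (𝓝 (s * c)) := by
  have hprod := ((h.comp (tendsto_sub_atTop_nat 1)).mul
    (tendsto_natCast_pred_rpow_div_rpow q)).mul (tendsto_rpow_sub_natCast_pred_rpow_div (-s)).neg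
  rw [mul_one, neg_neg, mul_comm] at hprod
  refine hprod.congr' ?_
  filter_upwards [eventually_ge_atTop 2] with n hn
  have hn0 : (0 : ℝ) < n := by positivity
  have hm0 : (0 : ℝ) < ((n - 1 : ℕ) : ℝ) := by exact_mod_cast (by omega : 0 < n - 1)
  rw [Function.comp_apply, rpow_natCast, rpow_natCast, show (q : ℝ) - s - 1 = q + (-s - 1) by ring,
    rpow_add hn0, rpow_natCast, rpow_neg hn0.le, rpow_neg hm0.le]
  field_simp
  ring

lemma eventually_abs_sub_mul_le_of_tendsto_div {ι : Type*} {l : Filter ι} {f g : ι → ℝ}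
    {c δ : ℝ} (h : Tendsto (fun i => f i / g i) l (𝓝 c)) (hg : ∀ᶠ i in l, 0 < g i)
    (hδ : 0 < δ) : ∀ᶠ i in l, |f i - c * g i| ≤ δ * g i := by
  filter_upwards [Metric.tendsto_nhds.1 h δ hδ, hg] with i hi hgi
  rw [Real.dist_eq] at hi
  calc |f i - c * g i| = |f i / g i - c| * g i := by
        rw [← abs_of_pos hgi, ← abs_mul, abs_of_pos hgi, sub_mul, div_mul_cancel₀ _ hgi.ne']
    _ ≤ δ * g i := by gcongr

lemma eventually_natCast_pred_rpow_le_two_mul (t : ℝ) :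
    ∀ᶠ n : ℕ in atTop, ((n - 1 : ℕ) : ℝ) ^ t ≤ 2 * (n : ℝ) ^ t := by
  have hpos : ∀ᶠ n : ℕ in atTop, 0 < (n : ℝ) ^ t :=
    (eventually_gt_atTop 0).mono fun n hn => rpow_pos_of_pos (Nat.cast_pos.2 hn) t
  filter_upwards [eventually_abs_sub_mul_le_of_tendsto_div
    (tendsto_natCast_pred_rpow_div_rpow t) hpos one_pos] with n hn
  linarith [le_of_abs_le hn]

lemma SmoothFam.abs_div_rpow_sub_le {r q : ℕ} {Q : RGraph r q} {F : Family r} {c δ : ℝ} {N : ℕ}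
    (hsm : SmoothFam Q F c δ N) (hq : 1 ≤ q) (s : ℝ) {n : ℕ} (hNn : N ≤ n) (hn : 0 < n) :
    |(injNum Q F n : ℝ) / (n : ℝ) ^ s - (injNum Q F (n - 1) : ℝ) / (n : ℝ) ^ s
        - q * c * (n : ℝ) ^ ((q : ℝ) - s - 1)| ≤ δ * (n : ℝ) ^ ((q : ℝ) - s - 1) := by
  have hn0 : (0 : ℝ) < n := Nat.cast_pos.2 hn
  have hpow : (n : ℝ) ^ ((q : ℝ) - s - 1) = (n : ℝ) ^ (q - 1) / (n : ℝ) ^ s := by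
    rw [sub_right_comm, rpow_sub hn0, ← Nat.cast_one, ← Nat.cast_sub hq, rpow_natCast]
  have hs : 0 < (n : ℝ) ^ s := rpow_pos_of_pos hn0 s
  rw [hpow, ← sub_div, mul_div_assoc', ← sub_div, abs_div, abs_of_pos hs, mul_div_assoc']
  exact div_le_div_of_nonneg_right (hsm n hNn) hs.le

theorem spectral_difference_general {r q : ℕ} (hr : 2 ≤ r) (hrq : r ≤ q)
    {α δ : ℝ} (hα : 1 < α) (hδ : 0 < δ)
    (Q : RGraph r q) (F HH : Family r) (hatpi : ℝ)
    (hlim : Tendsto (fun n : ℕ => (injNum Q F n : ℝ) / (n : ℝ) ^ q) atTop (nhds hatpi))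
    (N : ℕ) (hsm : SmoothFam Q F hatpi δ N) (hbal : BalancedSpec α Q F HH δ N) :
    ∃ N1 : ℕ, ∀ n : ℕ, N1 ≤ n →
      |famSpec α Q HH n - famSpec α Q HH (n - 1)
          - q * (α - 1) / α * hatpi * (n : ℝ) ^ ((q : ℝ) - q / α - 1)|
        ≤ 5 * δ * (n : ℝ) ^ ((q : ℝ) - q / α - 1) := by
  set s : ℝ := q / α
  have hcoef : (q : ℝ) * (α - 1) / α = q - s := by simp only [s]; field_simp
  have hpos : ∀ᶠ n : ℕ in atTop, 0 < (n : ℝ) ^ ((q : ℝ) - s - 1) :=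
    (eventually_gt_atTop 0).mono fun n hn => rpow_pos_of_pos (Nat.cast_pos.2 hn) _
  have hshift := eventually_abs_sub_mul_le_of_tendsto_div
    (tendsto_div_natCast_pred_rpow_sub_div_rpow hlim s) hpos hδ
  obtain ⟨N1, hN1⟩ := eventually_atTop.1 ((hshift.and
    (eventually_natCast_pred_rpow_le_two_mul ((q : ℝ) - s - 1))).and
    (eventually_ge_atTop (N + 2)))
  refine ⟨N1, fun n hn => ?_⟩
  obtain ⟨⟨hshift, hpred⟩, hNn⟩ := hN1 n hn
  have hμ := hbal n (by omega)
  have hμpred := (hbal (n - 1) (by omega)).trans (mul_le_mul_of_nonneg_left hpred hδ.le)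
  have hinj := hsm.abs_div_rpow_sub_le (n := n) (by omega) s (by omega) (by omega)
  rw [hcoef, abs_le]
  rw [abs_le] at hμ hμpred hinj hshift
  constructor <;> linarith

/-- **Lemma (spectral difference):** estimate for `μ_n - μ_{n-1}` where
`μ_n = λ_{α,Q}(n, 𝔥)`. -/
theorem spectral_difference {r q : ℕ} (hr : 2 ≤ r) (hrq : r ≤ q)
    {α δ : ℝ} (hα : 1 < α) (hδ : 0 < δ)
    (Q : RGraph r q) (F HH : Family r) (hatpi : ℝ)
    (hlim : Tendsto (fun n : ℕ => (injNum Q F n : ℝ) / (n : ℝ) ^ q) atTop (nhds hatpi))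
    (hpi : 0 < hatpi)
    (hfree : ∀ n : ℕ, ∀ H ∈ HH n, FFree F H)
    (hher : Hereditary HH)
    (N : ℕ) (hsm : SmoothFam Q F hatpi δ N) (hbal : BalancedSpec α Q F HH δ N) :
    ∃ N1 : ℕ, ∀ n : ℕ, N1 ≤ n →
      |famSpec α Q HH n - famSpec α Q HH (n - 1)
          - q * (α - 1) / α * hatpi * (n : ℝ) ^ ((q : ℝ) - q / α - 1)|
        ≤ 5 * δ * (n : ℝ) ^ ((q : ℝ) - q / α - 1) :=
  spectral_difference_general hr hrq hα hδ Q F HH hatpi hlim N hsm hbal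
end

section
/- Let $q \ge r \ge 2$ be integers, $\alpha > 1$ and $\hat{\pi} \in (0,1]$ be real numbers, $\varepsilon \in [0,1]$, and set $\delta := \frac{\hat{\pi}\varepsilon}{(q-1)\alpha}$. Let $Q$ be an $r$-graph on $q$ vertices and $\mathcal{H}$ an $r$-graph on vertex set $[n]$. Suppose $\mathbf{x} = (x_1,\ldots,x_n) \in \Delta_{\alpha}^{n-1}$ is a nonnegative vector with $x_j \ge (1-\delta) n^{-1/\alpha}$ for every $j \in [n]$, and suppose $i_* \in [n]$ is a vertex with $d_{Q,\mathcal{H}}(i_*) \le (1-\varepsilon) q \hat{\pi}\, n^{q-1}$. Then $\sum_{S \in L^{o}_{Q,\mathcal{H}}(i_*)} x_S^{\alpha} \le q\hat{\pi}$, where the sum is over the ordered $Q$-link of $i_*$ counted with multiplicity and $x_S := \prod_{k \in S} x_k$. -/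
open scoped Classical
open Finset Filter Real

set_option maxHeartbeats 1600000 in
private lemma aux_sum_bound {q n : ℕ} (hn : 0 < n) (F : Finset (Fin q → Fin n))
    (istar : Fin n)
    (hFinj : ∀ φ ∈ F, Function.Injective φ)
    (hFhit : ∀ φ ∈ F, ∃ u, φ u = istar)
    (p : Fin n → ℝ) (hp0 : ∀ j, 0 ≤ p j) (hpsum : ∑ j, p j = 1)
    (c : ℝ) (hc0 : 0 ≤ c) (hplb : ∀ j, c / n ≤ p j) :
    ∑ φ ∈ F, ∏ u ∈ Finset.univ.filter (fun u => φ u ≠ istar), p (φ u)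
      ≤ q * (1 - c ^ (q - 1)) + F.card * (c / n) ^ (q - 1) := by
  classical
  have hn' : (0:ℝ) < n := by exact_mod_cast hn
  have hcn0 : (0:ℝ) ≤ c / n := div_nonneg hc0 hn'.le
  set f : Fin q → Fin q → Fin n → ℝ :=
    fun u0 u j => if u = u0 then (if j = istar then 1 else 0) else p j with hfdef
  set g : Fin q → Fin q → Fin n → ℝ :=
    fun u0 u j => if u = u0 then (if j = istar then 1 else 0) else c / n with hgdef
  have hf0 : ∀ u0 u j, 0 ≤ f u0 u j := by
    intro u0 u j
    simp only [hfdef]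
    split_ifs <;> simp [hp0 j]
  have hg0 : ∀ u0 u j, 0 ≤ g u0 u j := by
    intro u0 u j
    simp only [hgdef]
    split_ifs <;> simp [hcn0]
  have hgf : ∀ u0 u j, g u0 u j ≤ f u0 u j := by
    intro u0 u j
    simp only [hfdef, hgdef]
    split_ifs <;> simp [hplb j]
  have hstep1 : ∀ φ ∈ F,
      ∏ u ∈ Finset.univ.filter (fun u => φ u ≠ istar), p (φ u)
        = ∑ u0, ∏ u, f u0 u (φ u) := by
    intro φ hφ
    obtain ⟨uw, huw⟩ := hFhit φ hφ
    have hinj := hFinj φ hφ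
    have hne : ∀ u, φ u = istar ↔ u = uw := by
      intro u
      constructor
      · intro h; exact hinj (h.trans huw.symm)
      · rintro rfl; exact huw
    have hsum : ∑ u0, ∏ u, f u0 u (φ u) = ∏ u, f uw u (φ u) := by
      refine Finset.sum_eq_single uw ?_ ?_
      · intro u0 _ hu0
        refine Finset.prod_eq_zero (Finset.mem_univ u0) ?_
        have hc : φ u0 ≠ istar := fun h => hu0 ((hne u0).mp h)
        simp [hfdef, hc]
      · intro h; exact absurd (Finset.mem_univ uw) h
    rw [hsum]
    have hfilter : Finset.univ.filter (fun u => φ u ≠ istar)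
        = Finset.univ.erase uw := by
      ext u
      simp [Finset.mem_erase, hne u]
    rw [hfilter, ← Finset.mul_prod_erase Finset.univ (fun u => f uw u (φ u))
        (Finset.mem_univ uw)]
    have h1 : f uw uw (φ uw) = 1 := by simp [hfdef, huw]
    rw [h1, one_mul]
    refine Finset.prod_congr rfl fun u hu => ?_
    have hu' : u ≠ uw := (Finset.mem_erase.mp hu).1
    simp [hfdef, hu']
  have hstep2 : ∀ φ ∈ F, ∑ u0, ∏ u, g u0 u (φ u) = (c / n) ^ (q - 1) := by
    intro φ hφ
    obtain ⟨uw, huw⟩ := hFhit φ hφ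
    have hinj := hFinj φ hφ
    have hne : ∀ u, φ u = istar ↔ u = uw := by
      intro u
      constructor
      · intro h; exact hinj (h.trans huw.symm)
      · rintro rfl; exact huw
    have hsum : ∑ u0, ∏ u, g u0 u (φ u) = ∏ u, g uw u (φ u) := by
      refine Finset.sum_eq_single uw ?_ ?_
      · intro u0 _ hu0
        refine Finset.prod_eq_zero (Finset.mem_univ u0) ?_
        have hc : φ u0 ≠ istar := fun h => hu0 ((hne u0).mp h)
        simp [hgdef, hc]
      · intro h; exact absurd (Finset.mem_univ uw) h
    rw [hsum, ← Finset.mul_prod_erase Finset.univ (fun u => g uw u (φ u))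
        (Finset.mem_univ uw)]
    have h1 : g uw uw (φ uw) = 1 := by simp [hgdef, huw]
    rw [h1, one_mul]
    have h2 : ∀ u ∈ Finset.univ.erase uw, g uw u (φ u) = c / n := by
      intro u hu
      simp [hgdef, (Finset.mem_erase.mp hu).1]
    rw [Finset.prod_congr rfl h2, Finset.prod_const,
      Finset.card_erase_of_mem (Finset.mem_univ uw), Finset.card_univ,
      Fintype.card_fin]
  have hsumf : ∀ u0 : Fin q, ∑ ψ : Fin q → Fin n, ∏ u, f u0 u (ψ u) = 1 := by
    intro u0
    rw [← Fintype.prod_sum]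
    refine Finset.prod_eq_one fun u _ => ?_
    by_cases h : u = u0
    · simp [hfdef, h, Finset.sum_ite_eq']
    · simp [hfdef, h, hpsum]
  have hsumg : ∀ u0 : Fin q, ∑ ψ : Fin q → Fin n, ∏ u, g u0 u (ψ u)
      = c ^ (q - 1) := by
    intro u0
    rw [← Fintype.prod_sum]
    have h2 : ∀ u : Fin q, ∑ j, g u0 u j = if u = u0 then 1 else c := by
      intro u
      by_cases h : u = u0
      · simp [hgdef, h, Finset.sum_ite_eq']
      · simp only [hgdef, if_neg h]
        rw [Finset.sum_const, Finset.card_univ, Fintype.card_fin, nsmul_eq_mul]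
        field_simp
    rw [Finset.prod_congr rfl fun u _ => h2 u,
      ← Finset.mul_prod_erase Finset.univ _ (Finset.mem_univ u0), if_pos rfl,
      one_mul]
    have h3 : ∀ u ∈ Finset.univ.erase u0, (if u = u0 then (1:ℝ) else c) = c := by
      intro u hu
      rw [if_neg (Finset.mem_erase.mp hu).1]
    rw [Finset.prod_congr rfl h3, Finset.prod_const,
      Finset.card_erase_of_mem (Finset.mem_univ u0), Finset.card_univ,
      Fintype.card_fin]
  calc ∑ φ ∈ F, ∏ u ∈ Finset.univ.filter (fun u => φ u ≠ istar), p (φ u)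
      = ∑ φ ∈ F, ∑ u0, ∏ u, f u0 u (φ u) := Finset.sum_congr rfl hstep1
    _ = ∑ u0 : Fin q, ∑ φ ∈ F, ∏ u, f u0 u (φ u) := Finset.sum_comm
    _ ≤ ∑ u0 : Fin q, ((1 - c ^ (q - 1)) + ∑ φ ∈ F, ∏ u, g u0 u (φ u)) := by
        refine Finset.sum_le_sum fun u0 _ => ?_
        have hsub : ∑ φ ∈ F, (∏ u, f u0 u (φ u) - ∏ u, g u0 u (φ u))
            ≤ 1 - c ^ (q - 1) := by
          calc ∑ φ ∈ F, (∏ u, f u0 u (φ u) - ∏ u, g u0 u (φ u))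
              ≤ ∑ ψ : Fin q → Fin n, (∏ u, f u0 u (ψ u) - ∏ u, g u0 u (ψ u)) := by
                refine Finset.sum_le_sum_of_subset_of_nonneg (Finset.subset_univ F)
                  fun ψ _ _ => ?_
                have hpp := Finset.prod_le_prod (s := (Finset.univ : Finset (Fin q)))
                  (f := fun u => g u0 u (ψ u)) (g := fun u => f u0 u (ψ u))
                  (fun u _ => hg0 u0 u (ψ u)) (fun u _ => hgf u0 u (ψ u))
                linarith
            _ = 1 - c ^ (q - 1) := by
                rw [Finset.sum_sub_distrib, hsumf u0, hsumg u0]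
        have hdist := Finset.sum_sub_distrib (s := F)
          (f := fun φ => ∏ u, f u0 u (φ u)) (g := fun φ => ∏ u, g u0 u (φ u))
        linarith
    _ = q * (1 - c ^ (q - 1)) + ∑ u0 : Fin q, ∑ φ ∈ F, ∏ u, g u0 u (φ u) := by
        rw [Finset.sum_add_distrib, Finset.sum_const, Finset.card_univ,
          Fintype.card_fin, nsmul_eq_mul]
    _ = q * (1 - c ^ (q - 1)) + F.card * (c / n) ^ (q - 1) := by
        congr 1
        rw [Finset.sum_comm, Finset.sum_congr rfl hstep2, Finset.sum_const,
          nsmul_eq_mul]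

set_option maxHeartbeats 1600000 in
/-- **Claim (link-weight upper bound):** if every coordinate of `x ∈ Δ_α^{n-1}` is at
least `(1-δ) n^{-1/α}` with `δ = π̂ε/((q-1)α)`, and `i*` has small `Q`-degree, then the
`α`-power sum of the weights over the ordered `Q`-link of `i*` is at most `q·π̂`. -/
theorem link_weight_sum_le {r q n : ℕ} (hr : 2 ≤ r) (hrq : r ≤ q)
    {α hatpi ε : ℝ} (hα : 1 < α) (hpi : 0 < hatpi) (hpi1 : hatpi ≤ 1)
    (hε : ε ∈ Set.Icc (0 : ℝ) 1)
    (Q : RGraph r q) (H : RGraph r n)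
    (x : Fin n → ℝ) (hxΔ : x ∈ simplex α n) (hxnn : ∀ j, 0 ≤ x j)
    (hxlb : ∀ j, (1 - hatpi * ε / (((q : ℝ) - 1) * α)) * (n : ℝ) ^ (-(1 : ℝ) / α) ≤ x j)
    (istar : Fin n)
    (hdeg : (qDeg Q H istar : ℝ) ≤ (1 - ε) * q * hatpi * (n : ℝ) ^ (q - 1)) :
    ∑ φ ∈ (Inj Q H).filter (fun φ => ∃ u, φ u = istar),
        (∏ u ∈ Finset.univ.filter (fun u => φ u ≠ istar), x (φ u)) ^ α
      ≤ q * hatpi := by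
  classical
  obtain ⟨hε0, hε1⟩ := hε
  have hn : 0 < n := istar.pos
  have hn' : (0:ℝ) < (n:ℝ) := by exact_mod_cast hn
  have hq2 : 2 ≤ q := hr.trans hrq
  have hq1R : (1:ℝ) ≤ (q:ℝ) - 1 := by
    have h2 : (2:ℝ) ≤ (q:ℝ) := by exact_mod_cast hq2
    linarith
  have hα0 : (0:ℝ) < α := by linarith
  set δ : ℝ := hatpi * ε / (((q:ℝ) - 1) * α) with hδdef
  have hden : (0:ℝ) < ((q:ℝ) - 1) * α := by nlinarith
  have hδ0 : 0 ≤ δ := div_nonneg (mul_nonneg hpi.le hε0) hden.le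
  have hεp1 : hatpi * ε ≤ 1 := by nlinarith
  have hαδ : ((q:ℝ) - 1) * (α * δ) = hatpi * ε := by
    rw [hδdef]
    field_simp
  have hαδ0 : 0 ≤ α * δ := mul_nonneg hα0.le hδ0
  have hαδ1 : α * δ ≤ 1 := by nlinarith
  have hδ1 : δ ≤ 1 := by nlinarith
  have h1δ0 : (0:ℝ) ≤ 1 - δ := by linarith
  set c0 : ℝ := (1 - δ) ^ α with hc0def
  have hc00 : 0 ≤ c0 := Real.rpow_nonneg h1δ0 α
  have hbern : 1 - α * δ ≤ c0 := by
    have h := one_add_mul_self_le_rpow_one_add (by linarith : (-1:ℝ) ≤ -δ) hα.le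
    have he : (1:ℝ) + -δ = 1 - δ := by ring
    rw [he] at h
    rw [hc0def]
    calc 1 - α * δ = 1 + α * -δ := by ring
      _ ≤ (1 - δ) ^ α := h
  have hc01 : c0 ≤ 1 := Real.rpow_le_one h1δ0 (by linarith) hα0.le
  have hpsum : ∑ j, x j ^ α = 1 := by
    have h := hxΔ
    simp only [simplex, Set.mem_setOf_eq] at h
    rw [← h]
    exact Finset.sum_congr rfl fun j _ => by rw [abs_of_nonneg (hxnn j)]
  have hplb : ∀ j, c0 / n ≤ x j ^ α := by
    intro j
    have hlow0 : (0:ℝ) ≤ (1 - δ) * (n:ℝ) ^ (-(1:ℝ)/α) :=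
      mul_nonneg h1δ0 (Real.rpow_nonneg hn'.le _)
    have h1 : ((1 - δ) * (n:ℝ) ^ (-(1:ℝ)/α)) ^ α ≤ x j ^ α :=
      Real.rpow_le_rpow hlow0 (hxlb j) hα0.le
    have h2 : ((1 - δ) * (n:ℝ) ^ (-(1:ℝ)/α)) ^ α = c0 / n := by
      rw [Real.mul_rpow h1δ0 (Real.rpow_nonneg hn'.le _), hc0def,
        ← Real.rpow_mul hn'.le]
      have hx : (-(1:ℝ)/α) * α = -1 := by field_simp
      rw [hx, Real.rpow_neg_one, div_eq_mul_inv]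
    rw [← h2]
    exact h1
  have hFinj : ∀ φ ∈ (Inj Q H).filter (fun φ => ∃ u, φ u = istar),
      Function.Injective φ := by
    intro φ hφ
    have h1 := (Finset.mem_filter.mp hφ).1
    simp only [Inj, Finset.mem_filter] at h1
    exact h1.2.1
  have hFhit : ∀ φ ∈ (Inj Q H).filter (fun φ => ∃ u, φ u = istar),
      ∃ u, φ u = istar := fun φ hφ => (Finset.mem_filter.mp hφ).2
  have hmain := aux_sum_bound hn ((Inj Q H).filter (fun φ => ∃ u, φ u = istar))
    istar hFinj hFhit (fun j => x j ^ α) (fun j => Real.rpow_nonneg (hxnn j) α)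
    hpsum c0 hc00 hplb
  have hgoal_eq : ∀ φ ∈ (Inj Q H).filter (fun φ => ∃ u, φ u = istar),
      (∏ u ∈ Finset.univ.filter (fun u => φ u ≠ istar), x (φ u)) ^ α
        = ∏ u ∈ Finset.univ.filter (fun u => φ u ≠ istar), x (φ u) ^ α :=
    fun φ _ => (Real.finset_prod_rpow _ _ (fun u _ => hxnn (φ u)) α).symm
  have hdeg' : ((((Inj Q H).filter (fun φ => ∃ u, φ u = istar)).card : ℝ))
      ≤ (1 - ε) * q * hatpi * (n:ℝ) ^ (q - 1) := by
    unfold qDeg at hdeg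
    exact hdeg
  calc ∑ φ ∈ (Inj Q H).filter (fun φ => ∃ u, φ u = istar),
        (∏ u ∈ Finset.univ.filter (fun u => φ u ≠ istar), x (φ u)) ^ α
      = ∑ φ ∈ (Inj Q H).filter (fun φ => ∃ u, φ u = istar),
          ∏ u ∈ Finset.univ.filter (fun u => φ u ≠ istar), x (φ u) ^ α :=
        Finset.sum_congr rfl hgoal_eq
    _ ≤ q * (1 - c0 ^ (q - 1))
        + (((Inj Q H).filter (fun φ => ∃ u, φ u = istar)).card : ℝ)
          * (c0 / n) ^ (q - 1) := hmain
    _ ≤ q * hatpi := by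
        have hA : 1 - hatpi * ε ≤ c0 ^ (q - 1) := by
          have h1 : 1 + ((q - 1 : ℕ) : ℝ) * (-(α * δ))
              ≤ (1 + -(α * δ)) ^ (q - 1) :=
            one_add_mul_le_pow (by linarith) (q - 1)
          have hcast : ((q - 1 : ℕ) : ℝ) = (q:ℝ) - 1 := by
            have h1q : (1:ℕ) ≤ q := by omega
            push_cast [Nat.cast_sub h1q]
            ring
          have h2 : (1 - α * δ) ^ (q - 1) ≤ c0 ^ (q - 1) :=
            pow_le_pow_left₀ (by linarith) hbern _
          have h3 : (1:ℝ) + ((q:ℝ) - 1) * (-(α * δ)) = 1 - hatpi * ε := by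
            rw [← hαδ]
            ring
          rw [hcast, h3] at h1
          have h4 : (1:ℝ) + -(α * δ) = 1 - α * δ := by ring
          rw [h4] at h1
          linarith
        have hApos : 0 ≤ c0 ^ (q - 1) := pow_nonneg hc00 _
        have hA1 : c0 ^ (q - 1) ≤ 1 := pow_le_one₀ hc00 hc01
        have hcd : (((Inj Q H).filter (fun φ => ∃ u, φ u = istar)).card : ℝ)
            * (c0 / n) ^ (q - 1) ≤ (1 - ε) * q * hatpi * c0 ^ (q - 1) := by
          have h4 := mul_le_mul_of_nonneg_right hdeg'
            (pow_nonneg (div_nonneg hc00 hn'.le) (q - 1))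
          calc (((Inj Q H).filter (fun φ => ∃ u, φ u = istar)).card : ℝ)
              * (c0 / n) ^ (q - 1)
              ≤ (1 - ε) * q * hatpi * (n:ℝ) ^ (q - 1) * (c0 / n) ^ (q - 1) := h4
            _ = (1 - ε) * q * hatpi * c0 ^ (q - 1) := by
                rw [div_pow]
                field_simp
        have h1επ : (0:ℝ) ≤ 1 - (1 - ε) * hatpi := by nlinarith
        have hq0 : (0:ℝ) ≤ (q:ℝ) := by positivity
        have hkey : 1 - hatpi ≤ c0 ^ (q - 1) * (1 - (1 - ε) * hatpi) := by
          have hs1 : (1 - hatpi * ε) * (1 - (1 - ε) * hatpi)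
              ≤ c0 ^ (q - 1) * (1 - (1 - ε) * hatpi) :=
            mul_le_mul_of_nonneg_right hA h1επ
          have hs2 : 1 - hatpi ≤ (1 - hatpi * ε) * (1 - (1 - ε) * hatpi) := by
            nlinarith [mul_nonneg (mul_nonneg (mul_pos hpi hpi).le hε0)
              (sub_nonneg.mpr hε1)]
          linarith
        have hfin := mul_le_mul_of_nonneg_left hkey hq0
        linarith [hcd, hfin]
end

section
/- Let $\alpha > 1$ be a real number. For every $\delta > 0$ there exists $N_0$ such that for every $n \ge N_0$, every $C_5$-colorable graph $G$ on $n$ vertices satisfies $\lambda_{\alpha,C_5}(G) \le \frac{|\mathrm{Aut}(C_5)| \cdot |T_{5,n}^{5}|}{n^{5/\alpha}} + \delta n^{4 - 5/\alpha}$, where $|\mathrm{Aut}(C_5)| = 10$. -/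
/-!
If `c` is a `C₅`-colouring of `G`, then for every injective copy `φ` of `C₅` in `G` the map
`c ∘ φ` is an endomorphism of `C₅`, hence one of its 10 automorphisms (`C₅` is a core).
The copies lying over a fixed automorphism are dominated by the product `∏ⱼ mⱼ` of the
colour-class masses `mⱼ = ∑_{c i = j} |xᵢ|`, so `P(x) ≤ 10 ∏ⱼ mⱼ ≤ 10 ((∑ᵢ |xᵢ|) / 5)⁵
≤ 10 (n^(1 - 1/α) / 5)⁵` by AM-GM and Hölder. The balanced Turán graph has
`∏ⱼ |Vⱼ| ≥ (n⁵ - O(n³)) / 5⁵` edges (the `n⁴` terms cancel because the parts are balanced),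
so the loss against `10 |T| / n^(5/α)` is `O(n^(3 - 5/α)) = o(n^(4 - 5/α))`.
-/

open scoped Classical
open Finset Filter Real

/-- The 5-cycle `C₅` as a 2-graph on 5 vertices. -/
def C5 : RGraph 2 5 where
  edges := {{0, 1}, {1, 2}, {2, 3}, {3, 4}, {4, 0}}
  card_eq := by decide

/-- The triangle `K₃` as a 2-graph on 3 vertices. -/
def K3 : RGraph 2 3 where
  edges := {{0, 1}, {1, 2}, {0, 2}}
  card_eq := by decide

/-- A graph is `C₅`-colorable if it admits a homomorphism to `C₅`. -/
def C5Colorable {n : ℕ} (G : RGraph 2 n) : Prop :=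
  ∃ φ : Fin n → Fin 5, ∀ e ∈ G.edges, e.image φ ∈ C5.edges
def IsHom {r a b : ℕ} (Q : RGraph r a) (H : RGraph r b) (f : Fin a → Fin b) : Prop :=
  ∀ e ∈ Q.edges, e.image f ∈ H.edges

lemma IsHom.comp {r a b d : ℕ} {Q : RGraph r a} {H : RGraph r b} {K : RGraph r d}
    {g : Fin b → Fin d} {f : Fin a → Fin b} (hg : IsHom H K g) (hf : IsHom Q H f) :
    IsHom Q K (g ∘ f) := fun e he => by
  rw [← Finset.image_image]
  exact hg _ (hf e he)

lemma mem_Inj {r a b : ℕ} {Q : RGraph r a} {H : RGraph r b} {φ : Fin a → Fin b} :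
    φ ∈ Inj Q H ↔ Function.Injective φ ∧ IsHom Q H φ := by
  simp [Inj, IsHom]

def c5Automorphisms : Finset (Fin 5 → Fin 5) :=
  {![0, 1, 2, 3, 4], ![1, 2, 3, 4, 0], ![2, 3, 4, 0, 1], ![3, 4, 0, 1, 2], ![4, 0, 1, 2, 3],
   ![0, 4, 3, 2, 1], ![1, 0, 4, 3, 2], ![2, 1, 0, 4, 3], ![3, 2, 1, 0, 4], ![4, 3, 2, 1, 0]}

lemma IsHom.mem_c5Automorphisms {ρ : Fin 5 → Fin 5} (hρ : IsHom C5 C5 ρ) :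
    ρ ∈ c5Automorphisms := by
  have key : ∀ a₀ a₁ a₂ a₃ a₄ : Fin 5, {a₀, a₁} ∈ C5.edges → {a₁, a₂} ∈ C5.edges →
      {a₂, a₃} ∈ C5.edges → {a₃, a₄} ∈ C5.edges → {a₄, a₀} ∈ C5.edges →
      ![a₀, a₁, a₂, a₃, a₄] ∈ c5Automorphisms := by
    decide
  have hρ_eq : ρ = ![ρ 0, ρ 1, ρ 2, ρ 3, ρ 4] := by
    ext i; fin_cases i <;> rfl
  have edge : ∀ i j : Fin 5, {i, j} ∈ C5.edges → {ρ i, ρ j} ∈ C5.edges := fun i j h => by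
    simpa only [Finset.image_insert, Finset.image_singleton] using hρ _ h
  rw [hρ_eq]
  exact key _ _ _ _ _ (edge 0 1 (by decide)) (edge 1 2 (by decide)) (edge 2 3 (by decide))
    (edge 3 4 (by decide)) (edge 4 0 (by decide))

lemma IsHom.injective_of_C5 {ρ : Fin 5 → Fin 5} (hρ : IsHom C5 C5 ρ) :
    Function.Injective ρ := by
  have hmem := hρ.mem_c5Automorphisms
  simp only [c5Automorphisms, Finset.mem_insert, Finset.mem_singleton] at hmem
  rcases hmem with rfl | rfl | rfl | rfl | rfl | rfl | rfl | rfl | rfl | rfl <;> decide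

lemma card_Inj_C5_C5_le : #(Inj C5 C5) ≤ 10 :=
  calc #(Inj C5 C5) ≤ #c5Automorphisms :=
        Finset.card_le_card fun ρ hρ => (mem_Inj.mp hρ).2.mem_c5Automorphisms
    _ = 10 := by decide

lemma lagPoly_le_sum_prod_abs {r a n : ℕ} (Q : RGraph r a) (H : RGraph r n) (x : Fin n → ℝ) :
    lagPoly Q H x ≤ ∑ φ ∈ Inj Q H, ∏ j, |x (φ j)| := by
  refine Finset.sum_le_sum fun φ hφ => ?_
  rw [Finset.prod_image fun i _ j _ h => (mem_Inj.mp hφ).1 h, ← Finset.abs_prod]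
  exact le_abs_self _

/-- By `hQ`, `c ∘ φ` is an automorphism `σ` of `Q`. The maps `φ` over a fixed `σ` are among all
maps with `c (φ j) = σ j` for every `j`, whose total weight factorises into the class masses. -/
lemma sum_Inj_prod_le_card_mul_prod_sum_fiber {r a n : ℕ} {Q : RGraph r a} {H : RGraph r n}
    (hQ : ∀ σ, IsHom Q Q σ → Function.Injective σ) {c : Fin n → Fin a} (hc : IsHom H Q c)
    (y : Fin n → ℝ) (hy : ∀ i, 0 ≤ y i) :
    ∑ φ ∈ Inj Q H, ∏ j, y (φ j) ≤ #(Inj Q Q) * ∏ j, ∑ i with c i = j, y i := by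
  have hmaps : ∀ φ ∈ Inj Q H, c ∘ φ ∈ Inj Q Q := fun φ hφ => by
    have hcφ := hc.comp (mem_Inj.mp hφ).2
    exact mem_Inj.mpr ⟨hQ _ hcφ, hcφ⟩
  have hfiber : ∀ σ ∈ Inj Q Q, ∑ φ ∈ Inj Q H with c ∘ φ = σ, ∏ j, y (φ j)
      ≤ ∏ j, ∑ i with c i = j, y i := fun σ hσ => by
    have hσ : Function.Bijective σ := Finite.injective_iff_bijective.mp (mem_Inj.mp hσ).1
    calc ∑ φ ∈ Inj Q H with c ∘ φ = σ, ∏ j, y (φ j)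
        ≤ ∑ φ ∈ Fintype.piFinset (fun j => {i | c i = σ j}), ∏ j, y (φ j) := by
          refine Finset.sum_le_sum_of_subset_of_nonneg (fun φ hφ => ?_)
            (fun φ _ _ => Finset.prod_nonneg fun j _ => hy _)
          simp only [Finset.mem_filter] at hφ
          simp [← hφ.2]
      _ = ∏ j, ∑ i with c i = σ j, y i := (Finset.prod_univ_sum _ _).symm
      _ = ∏ j, ∑ i with c i = j, y i := hσ.prod_comp fun j => ∑ i with c i = j, y i
  calc ∑ φ ∈ Inj Q H, ∏ j, y (φ j)
      = ∑ σ ∈ Inj Q Q, ∑ φ ∈ Inj Q H with c ∘ φ = σ, ∏ j, y (φ j) :=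
        (Finset.sum_fiberwise_of_maps_to hmaps _).symm
    _ ≤ ∑ σ ∈ Inj Q Q, ∏ j, ∑ i with c i = j, y i := Finset.sum_le_sum hfiber
    _ = #(Inj Q Q) * ∏ j, ∑ i with c i = j, y i := by rw [Finset.sum_const, nsmul_eq_mul]

lemma prod_le_mean_pow {ι : Type*} (s : Finset ι) (z : ι → ℝ) (hz : ∀ i ∈ s, 0 ≤ z i) :
    ∏ i ∈ s, z i ≤ ((∑ i ∈ s, z i) / #s) ^ #s := by
  rcases s.eq_empty_or_nonempty with rfl | hs
  · simp
  have hcard : (0 : ℝ) < #s := by exact_mod_cast hs.card_pos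
  have hamgm := Real.geom_mean_le_arith_mean_weighted s (fun _ => (#s : ℝ)⁻¹) z
    (fun _ _ => by positivity) (by simp [hcard.ne']) hz
  rw [← Finset.mul_sum, inv_mul_eq_div, Real.finsetProd_rpow _ _ hz] at hamgm
  calc ∏ i ∈ s, z i = ((∏ i ∈ s, z i) ^ (#s : ℝ)⁻¹) ^ #s := by
        rw [← Real.rpow_natCast, ← Real.rpow_mul (Finset.prod_nonneg hz),
          inv_mul_cancel₀ hcard.ne', Real.rpow_one]
    _ ≤ ((∑ i ∈ s, z i) / #s) ^ #s := by
        gcongr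
        exact Real.rpow_nonneg (Finset.prod_nonneg hz) _

lemma sum_le_rpow_of_sum_rpow_eq_one {ι : Type*} (s : Finset ι) {α : ℝ} (hα : 1 ≤ α)
    (y : ι → ℝ) (hy : ∀ i ∈ s, 0 ≤ y i) (hsum : ∑ i ∈ s, y i ^ α = 1) :
    ∑ i ∈ s, y i ≤ (#s : ℝ) ^ (1 - 1 / α) := by
  have hα0 : 0 < α := by linarith
  have hholder := Real.rpow_sum_le_const_mul_sum_rpow_of_nonneg s hα hy
  rw [hsum, mul_one] at hholder
  calc ∑ i ∈ s, y i = ((∑ i ∈ s, y i) ^ α) ^ (1 / α) := by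
        rw [← Real.rpow_mul (Finset.sum_nonneg hy), mul_one_div_cancel hα0.ne', Real.rpow_one]
    _ ≤ ((#s : ℝ) ^ (α - 1)) ^ (1 / α) := by
        gcongr
        exact Real.rpow_nonneg (Finset.sum_nonneg hy) _
    _ = (#s : ℝ) ^ (1 - 1 / α) := by
        rw [← Real.rpow_mul (Nat.cast_nonneg _)]
        congr 1
        field_simp

lemma rpow_one_sub_one_div_pow {x : ℝ} (hx : 0 < x) (α : ℝ) (k : ℕ) :
    (x ^ (1 - 1 / α)) ^ k = x ^ k / x ^ (k / α) := by
  rw [← Real.rpow_natCast, ← Real.rpow_mul hx.le, ← Real.rpow_natCast x k, ← Real.rpow_sub hx]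
  ring_nf

lemma specRad_le_of_isHom {α : ℝ} (hα : 1 ≤ α) {r a n : ℕ} {Q : RGraph r a} {H : RGraph r n}
    (hQ : ∀ σ, IsHom Q Q σ → Function.Injective σ) {c : Fin n → Fin a} (hc : IsHom H Q c) :
    specRad α Q H ≤ #(Inj Q Q) * ((n : ℝ) ^ (1 - 1 / α) / a) ^ a := by
  refine Real.sSup_le ?_ (by positivity)
  rintro _ ⟨x, hx, rfl⟩
  have hmass : ∑ j, ∑ i with c i = j, |x i| ≤ (n : ℝ) ^ (1 - 1 / α) := by
    rw [Finset.sum_fiberwise]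
    simpa using sum_le_rpow_of_sum_rpow_eq_one Finset.univ hα (fun i => |x i|)
      (fun i _ => abs_nonneg _) hx
  have hamgm := prod_le_mean_pow Finset.univ (fun j => ∑ i with c i = j, |x i|)
    (fun j _ => Finset.sum_nonneg fun i _ => abs_nonneg _)
  rw [Finset.card_univ, Fintype.card_fin] at hamgm
  calc lagPoly Q H x ≤ ∑ φ ∈ Inj Q H, ∏ j, |x (φ j)| := lagPoly_le_sum_prod_abs Q H x
    _ ≤ #(Inj Q Q) * ∏ j, ∑ i with c i = j, |x i| :=
        sum_Inj_prod_le_card_mul_prod_sum_fiber hQ hc _ fun i => abs_nonneg _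
    _ ≤ #(Inj Q Q) * ((n : ℝ) ^ (1 - 1 / α) / a) ^ a := by
        gcongr
        exact hamgm.trans (by gcongr)

lemma card_filter_val_mod_eq (n m c : ℕ) (hc : c < m) :
    #{i : Fin n | (i : ℕ) % m = c} = n / m + if c < n % m then 1 else 0 := by
  have hm : 0 < m := by omega
  rw [← Nat.mod_eq_of_lt hc, ← Nat.count_modEq_card n hm c, Nat.count_eq_card_filter_range,
    ← Nat.Iio_eq_range, ← Fin.map_valEmbedding_univ, Finset.filter_map, Finset.card_map]
  rfl

lemma prod_card_filter_mod_le_card_TuranHG (m n : ℕ) :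
    ∏ c : Fin m, #{i : Fin n | (i : ℕ) % m = c} ≤ #(TuranHG m m n).edges := by
  rw [← Fintype.card_piFinset]
  have hres : ∀ f ∈ Fintype.piFinset (fun c : Fin m => {i : Fin n | (i : ℕ) % m = c}),
      ∀ c, (f c : ℕ) % m = c := fun f hf c => by
    simpa using Fintype.mem_piFinset.mp hf c
  refine Finset.card_le_card_of_injOn (fun f => Finset.univ.image f) (fun f hf => ?_)
    (fun f hf g hg hfg => funext fun c => ?_)
  · have hinj : Function.Injective f := fun c d h =>
      Fin.ext (by rw [← hres f hf c, ← hres f hf d, h])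
    simp only [TuranHG, Finset.mem_coe, Finset.mem_filter, Finset.mem_powersetCard,
      Finset.subset_univ, true_and, Finset.card_image_of_injective _ hinj, Finset.card_univ,
      Fintype.card_fin, Finset.mem_image]
    rintro _ ⟨c, -, rfl⟩ _ ⟨d, -, rfl⟩ h
    rw [show c = d from Fin.ext (by rw [← hres f hf c, ← hres f hf d, h])]
  · have hc : f c ∈ Finset.univ.image g := by
      rw [← show Finset.univ.image f = Finset.univ.image g from hfg]
      exact Finset.mem_image_of_mem f (Finset.mem_univ c)
    obtain ⟨d, -, hd⟩ := Finset.mem_image.mp hc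
    rw [← hd, show d = c from Fin.ext (by rw [← hres g hg d, hd, hres f hf c])]

lemma pow_five_le_card_TuranHG_edges (n : ℕ) :
    n ^ 5 ≤ 3125 * #(TuranHG 5 5 n).edges + 2000 * n ^ 3 := by
  have hprod := prod_card_filter_mod_le_card_TuranHG 5 n
  rw [Finset.prod_congr rfl fun (c : Fin 5) _ => card_filter_val_mod_eq n 5 c c.isLt,
    Fin.prod_univ_five] at hprod
  generalize #(TuranHG 5 5 n).edges = T at hprod ⊢
  obtain ⟨k, r, hr, rfl⟩ : ∃ k r, r < 5 ∧ n = 5 * k + r :=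
    ⟨n / 5, n % 5, n.mod_lt (by norm_num), by omega⟩
  rw [show (5 * k + r) / 5 = k by omega, show (5 * k + r) % 5 = r by omega] at hprod
  interval_cases r <;> norm_num at hprod <;>
    nlinarith [hprod, Nat.zero_le k, Nat.zero_le (k ^ 2), Nat.zero_le (k ^ 3), Nat.zero_le (k ^ 4)]

lemma specRad_C5_le {α : ℝ} (hα : 1 ≤ α) {n : ℕ} (hn : 0 < n) {G : RGraph 2 n}
    (hG : C5Colorable G) :
    specRad α C5 G ≤ 10 * (n : ℝ) ^ 5 / 3125 / (n : ℝ) ^ ((5 : ℝ) / α) := by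
  obtain ⟨c, hc⟩ := hG
  have hn0 : (0 : ℝ) < n := by exact_mod_cast hn
  calc specRad α C5 G ≤ #(Inj C5 C5) * ((n : ℝ) ^ (1 - 1 / α) / 5) ^ 5 := by
        exact_mod_cast specRad_le_of_isHom hα (fun _ => IsHom.injective_of_C5) hc
    _ = #(Inj C5 C5) * ((n : ℝ) ^ 5 / 3125 / (n : ℝ) ^ ((5 : ℝ) / α)) := by
        rw [div_pow, rpow_one_sub_one_div_pow hn0]
        push_cast
        ring
    _ ≤ 10 * ((n : ℝ) ^ 5 / 3125 / (n : ℝ) ^ ((5 : ℝ) / α)) := by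
        gcongr
        exact_mod_cast card_Inj_C5_C5_le
    _ = 10 * (n : ℝ) ^ 5 / 3125 / (n : ℝ) ^ ((5 : ℝ) / α) := by ring

/-- **Claim (spectral bound for `C₅`-colorable graphs).** -/
theorem C5_colorable_spectral_bound {α : ℝ} (hα : 1 < α) :
    ∀ δ : ℝ, 0 < δ → ∃ N0 : ℕ, ∀ n : ℕ, N0 ≤ n → ∀ G : RGraph 2 n, C5Colorable G →
      specRad α C5 G ≤
        10 * ((TuranHG 5 5 n).edges.card : ℝ) / (n : ℝ) ^ ((5 : ℝ) / α)
          + δ * (n : ℝ) ^ ((4 : ℝ) - 5 / α) := by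
  intro δ hδ
  -- `7 > 10 · 2000 / 3125`, so `δ n ≥ 7` absorbs the Turán error term `2000 n³`
  refine ⟨⌈7 / δ⌉₊ + 1, fun n hn G hG => ?_⟩
  have hn0 : (0 : ℝ) < n := by exact_mod_cast (by omega : 0 < n)
  have hδn : 7 ≤ n * δ := (div_le_iff₀ hδ).mp (Nat.lt_of_ceil_lt (by omega)).le
  have hTuran : (n : ℝ) ^ 5 ≤ 3125 * #(TuranHG 5 5 n).edges + 2000 * n ^ 3 := by
    exact_mod_cast pow_five_le_card_TuranHG_edges n
  have hn3 : 7 * (n : ℝ) ^ 3 ≤ δ * n ^ 4 :=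
    calc 7 * (n : ℝ) ^ 3 ≤ n * δ * n ^ 3 := by gcongr
      _ = δ * n ^ 4 := by ring
  calc specRad α C5 G ≤ 10 * (n : ℝ) ^ 5 / 3125 / (n : ℝ) ^ ((5 : ℝ) / α) :=
        specRad_C5_le hα.le (by omega) hG
    _ ≤ (10 * #(TuranHG 5 5 n).edges + δ * n ^ 4) / (n : ℝ) ^ ((5 : ℝ) / α) := by
        gcongr
        linarith [pow_nonneg hn0.le 3]
    _ = 10 * #(TuranHG 5 5 n).edges / (n : ℝ) ^ ((5 : ℝ) / α)
          + δ * (n : ℝ) ^ ((4 : ℝ) - 5 / α) := by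
        rw [Real.rpow_sub hn0, Real.rpow_ofNat]
        ring
end

section
/- Let $\alpha \ge 1$, let $Q$ be an $r$-graph with $V(Q) = [q]$, and let $\mathcal{H}$ be an $r$-graph on vertex set $[n]$. Let $\mathbf{x} = (x_1,\ldots,x_n) \in \mathbb{R}^n$ be a nonnegative vector with $\beta := \sum_{\phi \in \mathrm{Inj}(Q,\mathcal{H})} \prod_{j \in \phi(V(Q))} x_j > 0$, and let $(X_1,\ldots,X_q)$ be the random embedding of $Q$ in $\mathcal{H}$ with distribution $\mathbb{P}((X_1,\ldots,X_q) = (i_1,\ldots,i_q)) = \frac{x_{i_1}\cdots x_{i_q}}{\beta}$ for every $(i_1,\ldots,i_q) \in \mathrm{Inj}(Q,\mathcal{H})$. For each $j \in [n]$ set $y_j := \frac{1}{q}\frac{x_j}{\beta} \sum_{\phi \in \mathrm{Inj}(Q,\mathcal{H},j)} \prod_{k \in \phi - j} x_k$. Then $\mathbb{H}[(X_1,\ldots,X_q)] - \frac{q}{\alpha}\mathbb{H}[\mu(X_1,\ldots,X_q)] = \log_2 \beta - \frac{q}{\alpha}\sum_{j \in [n]} y_j \log_2\Big(\frac{x_j^{\alpha}}{y_j}\Big)$,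 with the conventions $0\log_2 0 = 0$ and that terms with $y_j = 0$ vanish. -/
open scoped Classical
open Finset Filter Real

/-- `x ↦ -(x * log₂ x)`, with the convention `0 * log₂ 0 = 0`. -/
noncomputable def negMulLog2 (x : ℝ) : ℝ := -(x * Real.logb 2 x)

/-- A random embedding of `Q` in `H`, described by its distribution `p` on `q`-tuples:
nonnegative, sums to `1`, supported on `Inj(Q,H)`, and invariant under `Aut(Q)`. -/
def IsRandEmb {r q n : ℕ} (Q : RGraph r q) (H : RGraph r n)
    (p : (Fin q → Fin n) → ℝ) : Prop :=
  (∀ φ, 0 ≤ p φ) ∧ (∑ φ, p φ = 1) ∧ (∀ φ, φ ∉ Inj Q H → p φ = 0) ∧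
    (∀ σ ∈ Inj Q Q, ∀ φ, p (φ ∘ σ) = p φ)

/-- The Shannon entropy `ℍ[(X₁,…,X_q)]` of the random tuple with distribution `p`. -/
noncomputable def tupleEntropy {q n : ℕ} (p : (Fin q → Fin n) → ℝ) : ℝ :=
  ∑ φ, negMulLog2 (p φ)

/-- `ℙ(μ(X₁,…,X_q) = v)`, the mixture distribution of the coordinates. -/
noncomputable def mixProb {q n : ℕ} (p : (Fin q → Fin n) → ℝ) (v : Fin n) : ℝ :=
  (1 / q) * ∑ i : Fin q, ∑ φ ∈ Finset.univ.filter (fun φ => φ i = v), p φ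

/-- The Shannon entropy `ℍ[μ(X₁,…,X_q)]` of the mixture distribution. -/
noncomputable def mixEntropy {q n : ℕ} (p : (Fin q → Fin n) → ℝ) : ℝ :=
  ∑ v, negMulLog2 (mixProb p v)

/-- The `(α,Q)`-entropic density of `H`. -/
noncomputable def entDensity (α : ℝ) {r q n : ℕ} (Q : RGraph r q) (H : RGraph r n) : ℝ :=
  sSup {y | ∃ p : (Fin q → Fin n) → ℝ, IsRandEmb Q H p ∧
    y = (2 : ℝ) ^ (tupleEntropy p - (q / α) * mixEntropy p)}

lemma aux_prod_logb {ι : Type*} (s : Finset ι) (f : ι → ℝ) (hf : ∀ i ∈ s, 0 ≤ f i) :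
    (∏ i ∈ s, f i) * Real.logb 2 (∏ i ∈ s, f i)
      = (∏ i ∈ s, f i) * ∑ i ∈ s, Real.logb 2 (f i) := by
  by_cases h : ∀ i ∈ s, f i ≠ 0
  · rw [Real.logb_prod _ _ h]
  · push_neg at h
    obtain ⟨i, hi, hfi⟩ := h
    rw [Finset.prod_eq_zero hi hfi, zero_mul, zero_mul]

lemma aux_logb_rpow {x α : ℝ} (hx : 0 < x) :
    Real.logb 2 (x ^ α) = α * Real.logb 2 x := by
  unfold Real.logb
  rw [Real.log_rpow hx]
  ring

/-- **Claim (entropy difference identity):** for the random embedding with distribution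
proportional to the weights `x`, the entropy difference equals
`log₂ β - (q/α) ∑_j y_j log₂(x_j^α / y_j)`. -/
theorem entropy_difference_identity {r q n : ℕ} {α : ℝ} (hα : 1 ≤ α)
    (Q : RGraph r q) (H : RGraph r n)
    (x : Fin n → ℝ) (hx : ∀ j, 0 ≤ x j)
    (β : ℝ) (hβ : β = ∑ φ ∈ Inj Q H, ∏ j ∈ Finset.univ.image φ, x j) (hβpos : 0 < β)
    (p : (Fin q → Fin n) → ℝ)
    (hp : ∀ φ, p φ =
      if φ ∈ Inj Q H then (∏ j ∈ Finset.univ.image φ, x j) / β else 0)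
    (y : Fin n → ℝ)
    (hy : ∀ j, y j = (1 / q) * (x j / β) *
      ∑ φ ∈ (Inj Q H).filter (fun φ => ∃ u, φ u = j),
        ∏ u ∈ Finset.univ.filter (fun u => φ u ≠ j), x (φ u)) :
    tupleEntropy p - (q / α) * mixEntropy p
      = Real.logb 2 β - (q / α) * ∑ j, y j * Real.logb 2 (x j ^ α / y j) := by
  have hαne : α ≠ 0 := by intro h; rw [h] at hα; linarith
  have hβne : β ≠ 0 := ne_of_gt hβpos
  set P : (Fin q → Fin n) → ℝ := fun φ => ∏ j ∈ Finset.univ.image φ, x j with hPdef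
  have hPnn : ∀ φ, 0 ≤ P φ := fun φ => Finset.prod_nonneg fun i _ => hx i
  set S : Fin n → ℝ :=
    fun j => ∑ φ ∈ (Inj Q H).filter (fun φ => ∃ u, φ u = j), P φ with hSdef
  have hSval : ∀ j, S j = ∑ φ ∈ (Inj Q H).filter (fun φ => ∃ u, φ u = j), P φ :=
    fun j => rfl
  have hsum : ∑ φ ∈ Inj Q H, P φ = β := hβ.symm
  have hinj : ∀ φ ∈ Inj Q H, Function.Injective φ := by
    intro φ hφ
    simp only [Inj, Finset.mem_filter] at hφ
    exact hφ.2.1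
  have hPim : ∀ φ ∈ Inj Q H, P φ = ∏ u, x (φ u) :=
    fun φ hφ => Finset.prod_image fun a _ b _ h => hinj φ hφ h
  have hkey : ∀ (j : Fin n), ∀ φ ∈ (Inj Q H).filter (fun φ => ∃ u, φ u = j),
      x j * ∏ u ∈ Finset.univ.filter (fun u => φ u ≠ j), x (φ u) = P φ := by
    intro j φ hφ
    rw [Finset.mem_filter] at hφ
    obtain ⟨hφI, u₀, hu₀⟩ := hφ
    have hfil : Finset.univ.filter (fun u => φ u = j) = {u₀} := by
      ext u
      simp only [Finset.mem_filter, Finset.mem_univ, true_and, Finset.mem_singleton]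
      constructor
      · intro h; exact hinj φ hφI (h.trans hu₀.symm)
      · intro h; rw [h, hu₀]
    rw [hPim φ hφI,
      ← Finset.prod_filter_mul_prod_filter_not Finset.univ (fun u => φ u = j),
      hfil, Finset.prod_singleton, hu₀]
  have hST : ∀ j, x j * (∑ φ ∈ (Inj Q H).filter (fun φ => ∃ u, φ u = j),
      ∏ u ∈ Finset.univ.filter (fun u => φ u ≠ j), x (φ u)) = S j := by
    intro j
    rw [hSval j, Finset.mul_sum]
    exact Finset.sum_congr rfl (hkey j)
  have hyS : ∀ j, y j = (1 / (q : ℝ)) * (S j / β) := by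
    intro j
    rw [hy j, ← hST j]
    ring
  have hSnn : ∀ j, 0 ≤ S j := fun j => Finset.sum_nonneg fun φ _ => hPnn φ
  have hqy : ∀ j, (q : ℝ) * y j = S j / β := by
    intro j
    rcases Nat.eq_zero_or_pos q with hq | hq
    · subst hq
      have hS0 : S j = 0 := by
        rw [hSval j]
        rw [Finset.filter_false_of_mem (fun φ _ => by rintro ⟨u, -⟩; exact u.elim0)]
        exact Finset.sum_empty
      rw [hS0, hyS j, hS0]
      norm_num
    · have hqne : (q : ℝ) ≠ 0 := Nat.cast_ne_zero.mpr hq.ne'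
      rw [hyS j]
      field_simp
  have hyx0 : ∀ j, x j = 0 → y j = 0 := by
    intro j h
    rw [hy j, h]
    simp
  -- mixture probability equals y
  have hmixy : ∀ v, mixProb p v = y v := by
    intro v
    have hswap : ∑ i : Fin q, ∑ φ ∈ Finset.univ.filter (fun φ => φ i = v), p φ
        = ∑ φ : Fin q → Fin n, ∑ i ∈ Finset.univ.filter (fun i => φ i = v), p φ := by
      simp_rw [Finset.sum_filter]
      exact Finset.sum_comm
    have h2 : ∀ φ : Fin q → Fin n, ∑ i ∈ Finset.univ.filter (fun i => φ i = v), p φ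
        = if φ ∈ (Inj Q H).filter (fun φ => ∃ u, φ u = v) then P φ / β else 0 := by
      intro φ
      by_cases hφI : φ ∈ Inj Q H
      · by_cases hex : ∃ u, φ u = v
        · obtain ⟨u₀, hu₀⟩ := hex
          have hfil : Finset.univ.filter (fun i => φ i = v) = {u₀} := by
            ext u
            simp only [Finset.mem_filter, Finset.mem_univ, true_and, Finset.mem_singleton]
            constructor
            · intro h; exact hinj φ hφI (h.trans hu₀.symm)
            · intro h; rw [h, hu₀]
          rw [hfil, Finset.sum_singleton, hp φ, if_pos hφI,
            if_pos (Finset.mem_filter.mpr ⟨hφI, u₀, hu₀⟩)]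
        · have hfil : Finset.univ.filter (fun i => φ i = v) = ∅ :=
            Finset.filter_false_of_mem fun i _ h => hex ⟨i, h⟩
          rw [hfil, Finset.sum_empty, if_neg (by simp [Finset.mem_filter, hex])]
      · rw [if_neg (by simp [Finset.mem_filter, hφI])]
        simp [hp φ, hφI]
    calc mixProb p v
        = (1 / (q : ℝ)) * ∑ φ : Fin q → Fin n,
            (if φ ∈ (Inj Q H).filter (fun φ => ∃ u, φ u = v) then P φ / β else 0) := by
          rw [mixProb, hswap]
          congr 1
          exact Finset.sum_congr rfl fun φ _ => h2 φ
      _ = (1 / (q : ℝ)) * (S v / β) := by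
          rw [Finset.sum_ite_mem, Finset.univ_inter, hSval v, Finset.sum_div]
      _ = y v := (hyS v).symm
  -- tuple entropy
  have htup1 : tupleEntropy p = ∑ φ ∈ Inj Q H, negMulLog2 (P φ / β) := by
    have h0 : ∀ φ ∈ (Finset.univ : Finset (Fin q → Fin n)), φ ∉ Inj Q H →
        negMulLog2 (p φ) = 0 := by
      intro φ _ hφ
      rw [hp φ, if_neg hφ]
      simp [negMulLog2]
    rw [tupleEntropy, ← Finset.sum_subset (Finset.subset_univ (Inj Q H)) h0]
    exact Finset.sum_congr rfl fun φ hφ => by rw [hp φ, if_pos hφ]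
  have hent : ∀ φ ∈ Inj Q H, negMulLog2 (P φ / β)
      = (P φ / β) * Real.logb 2 β - (1 / β) * (P φ * Real.logb 2 (P φ)) := by
    intro φ _
    by_cases h0 : P φ = 0
    · simp [negMulLog2, h0]
    · rw [negMulLog2, Real.logb_div h0 hβne]
      ring
  have htup : tupleEntropy p
      = Real.logb 2 β - (1 / β) * ∑ φ ∈ Inj Q H, P φ * Real.logb 2 (P φ) := by
    rw [htup1, Finset.sum_congr rfl hent, Finset.sum_sub_distrib,
      ← Finset.sum_mul, ← Finset.sum_div, hsum, div_self hβne, one_mul,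
      ← Finset.mul_sum]
  -- log of product expansion
  have hPlog : ∀ φ ∈ Inj Q H, P φ * Real.logb 2 (P φ)
      = ∑ j, (if j ∈ Finset.univ.image φ then P φ * Real.logb 2 (x j) else 0) := by
    intro φ _
    rw [Finset.sum_ite_mem, Finset.univ_inter, ← Finset.mul_sum]
    exact aux_prod_logb _ _ fun i _ => hx i
  have hlogsum : ∑ φ ∈ Inj Q H, P φ * Real.logb 2 (P φ)
      = ∑ j, Real.logb 2 (x j) * S j := by
    rw [Finset.sum_congr rfl hPlog, Finset.sum_comm]
    refine Finset.sum_congr rfl fun j _ => ?_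
    rw [← Finset.sum_filter]
    have hfe : (Inj Q H).filter (fun φ => j ∈ Finset.univ.image φ)
        = (Inj Q H).filter (fun φ => ∃ u, φ u = j) := by
      apply Finset.filter_congr
      intro φ _
      simp [Finset.mem_image]
    rw [hfe, hSval j, Finset.mul_sum]
    exact Finset.sum_congr rfl fun φ _ => mul_comm _ _
  have hfin : (1 / β) * ∑ j, Real.logb 2 (x j) * S j
      = (q : ℝ) * ∑ j, y j * Real.logb 2 (x j) := by
    rw [Finset.mul_sum, Finset.mul_sum]
    refine Finset.sum_congr rfl fun j _ => ?_
    conv_rhs => rw [← mul_assoc, hqy j]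
    ring
  have hmixE : mixEntropy p = - ∑ j, y j * Real.logb 2 (y j) := by
    rw [mixEntropy, ← Finset.sum_neg_distrib]
    exact Finset.sum_congr rfl fun v _ => by rw [negMulLog2, hmixy v]
  have hpt : ∀ j ∈ (Finset.univ : Finset (Fin n)), y j * Real.logb 2 (x j ^ α / y j)
      = α * (y j * Real.logb 2 (x j)) - y j * Real.logb 2 (y j) := by
    intro j _
    by_cases hyj : y j = 0
    · simp [hyj]
    · have hxj : 0 < x j := by
        rcases (hx j).lt_or_eq with h | h
        · exact h
        · exact absurd (hyx0 j h.symm) hyj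
      have hxa : x j ^ α ≠ 0 := by positivity
      rw [Real.logb_div hxa hyj, aux_logb_rpow hxj]
      ring
  rw [htup, hlogsum, hfin, hmixE, Finset.sum_congr rfl hpt,
    Finset.sum_sub_distrib, ← Finset.mul_sum]
  field_simp
  ring
end

section
/- Let $\alpha \ge 1$ be a real number, $Q$ an $r$-graph, and $\mathcal{H}$ an $r$-graph on vertex set $[n]$. Suppose vertices $i$ and $j$ are equivalent in $\mathcal{H}$, i.e. the transposition $(ij)$ is an automorphism of $\mathcal{H}$. Let $\mathbf{x} = (x_1,\ldots,x_n) \in \Delta_{\alpha}^{n-1}$ be a nonnegative vector, and define $\mathbf{y} = (y_1,\ldots,y_n) \in \Delta_{\alpha}^{n-1}$ by $y_i = y_j = \big(\frac{x_i^{\alpha} + x_j^{\alpha}}{2}\big)^{1/\alpha}$ and $y_k = x_k$ for $k \in [n] \setminus \{i,j\}$. Then $P_{Q,\mathcal{H}}(\mathbf{y}) \ge P_{Q,\mathcal{H}}(\mathbf{x})$. -/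
open scoped Classical
open Finset Filter Real

lemma swap_mem_image {n : ℕ} (i j : Fin n) (S : Finset (Fin n)) (k : Fin n) :
    k ∈ S.image (Equiv.swap i j) ↔ Equiv.swap i j k ∈ S := by
  simp only [Finset.mem_image]
  constructor
  · rintro ⟨m, hm, rfl⟩; simpa using hm
  · intro h; exact ⟨_, h, by simp⟩

lemma swap_image_both {n : ℕ} {i j : Fin n} {S : Finset (Fin n)} (hi : i ∈ S) (hj : j ∈ S) :
    S.image (Equiv.swap i j) = S := by
  ext k
  rw [swap_mem_image, Equiv.swap_apply_def]
  split_ifs <;> aesop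

lemma swap_image_none {n : ℕ} {i j : Fin n} {S : Finset (Fin n)} (hi : i ∉ S) (hj : j ∉ S) :
    S.image (Equiv.swap i j) = S := by
  ext k
  rw [swap_mem_image, Equiv.swap_apply_def]
  split_ifs <;> aesop

lemma swap_image_one {n : ℕ} {i j : Fin n} {S : Finset (Fin n)} (hi : i ∈ S) (hj : j ∉ S) :
    S.image (Equiv.swap i j) = insert j (S.erase i) := by
  ext k
  rw [swap_mem_image, Equiv.swap_apply_def, Finset.mem_insert, Finset.mem_erase]
  split_ifs <;> aesop

lemma pm2 {α p q : ℝ} (hα : 1 ≤ α) (hp : 0 ≤ p) (hq : 0 ≤ q) :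
    ((p + q) / 2) ^ α ≤ (p ^ α + q ^ α) / 2 := by
  have h := Real.rpow_arith_mean_le_arith_mean_rpow (Finset.univ : Finset (Fin 2))
    ![1/2, 1/2] ![p, q] (by intro k _; fin_cases k <;> norm_num)
    (by simp [Fin.sum_univ_succ]; norm_num) (by intro k _; fin_cases k <;> assumption) hα
  simp only [Fin.sum_univ_two, Matrix.cons_val_zero, Matrix.cons_val_one,
    Matrix.head_cons] at h
  have e1 : (p + q) / 2 = 1/2 * p + 1/2 * q := by ring
  rw [e1]
  linarith [h]

/-- **Lemma (symmetrization over equivalent vertices).** -/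
theorem symmetrize_equivalent_vertices {r a n : ℕ} {α : ℝ} (hα : 1 ≤ α)
    (Q : RGraph r a) (H : RGraph r n) (i j : Fin n)
    (heq : ∀ e : Finset (Fin n), e ∈ H.edges ↔ e.image (Equiv.swap i j) ∈ H.edges)
    (x : Fin n → ℝ) (hx : x ∈ simplex α n) (hnn : ∀ k, 0 ≤ x k)
    (y : Fin n → ℝ)
    (hy : ∀ k, y k =
      if k = i ∨ k = j then ((x i ^ α + x j ^ α) / 2) ^ (1 / α) else x k) :
    y ∈ simplex α n ∧ lagPoly Q H x ≤ lagPoly Q H y := by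
  have hα0 : (0:ℝ) < α := lt_of_lt_of_le one_pos hα
  have hαne : α ≠ 0 := ne_of_gt hα0
  by_cases hij : i = j
  · subst hij
    have hyx : y = x := by
      funext k
      rw [hy k]
      split
      · next h =>
        have hk : k = i := by tauto
        subst hk
        rw [add_self_div_two, one_div, Real.rpow_rpow_inv (hnn k) hαne]
      · rfl
    rw [hyx]
    exact ⟨hx, le_refl _⟩
  -- main case
  set σ := Equiv.swap i j with hσ
  set m : ℝ := ((x i ^ α + x j ^ α) / 2) ^ (1 / α) with hm
  have ha : (0:ℝ) ≤ x i ^ α := Real.rpow_nonneg (hnn i) α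
  have hb : (0:ℝ) ≤ x j ^ α := Real.rpow_nonneg (hnn j) α
  have hm0 : 0 ≤ m := Real.rpow_nonneg (by linarith) _
  have hmα : m ^ α = (x i ^ α + x j ^ α) / 2 := by
    rw [hm, one_div, Real.rpow_inv_rpow (by linarith) hαne]
  have hyi : y i = m := by rw [hy]; simp [hm]
  have hyj : y j = m := by rw [hy]; simp [hm]
  have hyo : ∀ k, k ≠ i → k ≠ j → y k = x k := by
    intro k h1 h2; rw [hy]; simp [h1, h2]
  -- AM-GM : x i * x j ≤ m * m
  have hgm : x i * x j ≤ m * m := by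
    rw [← Real.rpow_le_rpow_iff (mul_nonneg (hnn i) (hnn j)) (mul_nonneg hm0 hm0) hα0,
      Real.mul_rpow (hnn i) (hnn j), Real.mul_rpow hm0 hm0, hmα]
    nlinarith [sq_nonneg (x i ^ α - x j ^ α)]
  -- power mean : x i + x j ≤ m + m
  have ham : x i + x j ≤ m + m := by
    have h1 : ((x i + x j) / 2) ^ α ≤ m ^ α := by
      rw [hmα]; exact pm2 hα (hnn i) (hnn j)
    have h2 : (x i + x j) / 2 ≤ m := by
      rwa [Real.rpow_le_rpow_iff (by linarith [hnn i, hnn j]) hm0 hα0] at h1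
    linarith
  constructor
  · -- simplex membership
    have hji : j ≠ i := fun h => hij h.symm
    have hju : j ∈ (Finset.univ : Finset (Fin n)).erase i := by simp [hji]
    have key : ∀ z : Fin n → ℝ,
        ∑ k, |z k| ^ α = |z i| ^ α + |z j| ^ α + ∑ k ∈ (Finset.univ.erase i).erase j, |z k| ^ α := by
      intro z
      rw [← Finset.add_sum_erase _ _ (Finset.mem_univ i), ← Finset.add_sum_erase _ _ hju]
      ring
    have hxs : (1:ℝ) = |x i| ^ α + |x j| ^ α + ∑ k ∈ (Finset.univ.erase i).erase j, |x k| ^ α := by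
      rw [← key x]; exact hx.symm
    show ∑ k, |y k| ^ α = 1
    rw [key y]
    have htail : ∑ k ∈ (Finset.univ.erase i).erase j, |y k| ^ α
        = ∑ k ∈ (Finset.univ.erase i).erase j, |x k| ^ α := by
      refine Finset.sum_congr rfl fun k hk => ?_
      rw [Finset.mem_erase, Finset.mem_erase] at hk
      rw [hyo k hk.2.1 hk.1]
    rw [htail, hyi, hyj, abs_of_nonneg hm0, hmα,
      abs_of_nonneg (hnn i), abs_of_nonneg (hnn j)] at *
    linarith [hxs]
  · -- lagPoly inequality
    have hτmem : ∀ φ ∈ Inj Q H, (⇑σ ∘ φ) ∈ Inj Q H := by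
      intro φ hφ
      rw [Inj, Finset.mem_filter] at hφ ⊢
      obtain ⟨-, hinj, hedge⟩ := hφ
      refine ⟨Finset.mem_univ _, σ.injective.comp hinj, fun e he => ?_⟩
      have : e.image (⇑σ ∘ φ) = (e.image φ).image σ := (Finset.image_image).symm
      rw [this]
      exact (heq _).1 (hedge e he)
    have hinv : ∀ φ : Fin a → Fin n, ⇑σ ∘ (⇑σ ∘ φ) = φ := by
      intro φ; funext k; simp [hσ]
    -- pointwise key inequality
    have key : ∀ S : Finset (Fin n),
        0 ≤ (∏ k ∈ S, y k - ∏ k ∈ S, x k)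
          + (∏ k ∈ S.image σ, y k - ∏ k ∈ S.image σ, x k) := by
      intro S
      by_cases hiS : i ∈ S <;> by_cases hjS : j ∈ S
      · -- both
        rw [swap_image_both hiS hjS]
        have hjS' : j ∈ S.erase i := Finset.mem_erase.2 ⟨fun h => hij h.symm, hjS⟩
        have hP : (0:ℝ) ≤ ∏ k ∈ (S.erase i).erase j, x k :=
          Finset.prod_nonneg fun k _ => hnn k
        have hpy : ∏ k ∈ S, y k = m * (m * ∏ k ∈ (S.erase i).erase j, x k) := by
          rw [← Finset.mul_prod_erase _ _ hiS, ← Finset.mul_prod_erase _ _ hjS', hyi, hyj]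
          congr 1
          congr 1
          refine Finset.prod_congr rfl fun k hk => ?_
          rw [Finset.mem_erase, Finset.mem_erase] at hk
          exact hyo k hk.2.1 hk.1
        have hpx : ∏ k ∈ S, x k = x i * (x j * ∏ k ∈ (S.erase i).erase j, x k) := by
          rw [← Finset.mul_prod_erase _ _ hiS, ← Finset.mul_prod_erase _ _ hjS']
        rw [hpy, hpx]
        nlinarith [hgm, hP]
      · -- i ∈ S, j ∉ S
        rw [swap_image_one hiS hjS]
        have hjS' : j ∉ S.erase i := fun h => hjS (Finset.mem_of_mem_erase h)
        have hP : (0:ℝ) ≤ ∏ k ∈ S.erase i, x k := Finset.prod_nonneg fun k _ => hnn k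
        have htail : ∏ k ∈ S.erase i, y k = ∏ k ∈ S.erase i, x k := by
          refine Finset.prod_congr rfl fun k hk => ?_
          rw [Finset.mem_erase] at hk
          exact hyo k hk.1 (fun h => hjS (h ▸ hk.2))
        have hpy : ∏ k ∈ S, y k = m * ∏ k ∈ S.erase i, x k := by
          rw [← Finset.mul_prod_erase _ _ hiS, hyi, htail]
        have hpx : ∏ k ∈ S, x k = x i * ∏ k ∈ S.erase i, x k := by
          rw [← Finset.mul_prod_erase _ _ hiS]
        have hpy' : ∏ k ∈ insert j (S.erase i), y k = m * ∏ k ∈ S.erase i, x k := by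
          rw [Finset.prod_insert hjS', hyj, htail]
        have hpx' : ∏ k ∈ insert j (S.erase i), x k = x j * ∏ k ∈ S.erase i, x k := by
          rw [Finset.prod_insert hjS']
        rw [hpy, hpx, hpy', hpx']
        nlinarith [ham, hP]
      · -- j ∈ S, i ∉ S
        have hσ' : σ = Equiv.swap j i := by rw [hσ, Equiv.swap_comm]
        rw [hσ', swap_image_one hjS hiS]
        have hiS' : i ∉ S.erase j := fun h => hiS (Finset.mem_of_mem_erase h)
        have hP : (0:ℝ) ≤ ∏ k ∈ S.erase j, x k := Finset.prod_nonneg fun k _ => hnn k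
        have htail : ∏ k ∈ S.erase j, y k = ∏ k ∈ S.erase j, x k := by
          refine Finset.prod_congr rfl fun k hk => ?_
          rw [Finset.mem_erase] at hk
          exact hyo k (fun h => hiS (h ▸ hk.2)) hk.1
        have hpy : ∏ k ∈ S, y k = m * ∏ k ∈ S.erase j, x k := by
          rw [← Finset.mul_prod_erase _ _ hjS, hyj, htail]
        have hpx : ∏ k ∈ S, x k = x j * ∏ k ∈ S.erase j, x k := by
          rw [← Finset.mul_prod_erase _ _ hjS]
        have hpy' : ∏ k ∈ insert i (S.erase j), y k = m * ∏ k ∈ S.erase j, x k := by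
          rw [Finset.prod_insert hiS', hyi, htail]
        have hpx' : ∏ k ∈ insert i (S.erase j), x k = x i * ∏ k ∈ S.erase j, x k := by
          rw [Finset.prod_insert hiS']
        rw [hpy, hpx, hpy', hpx']
        nlinarith [ham, hP]
      · -- neither
        rw [swap_image_none hiS hjS]
        have : ∏ k ∈ S, y k = ∏ k ∈ S, x k := by
          refine Finset.prod_congr rfl fun k hk => ?_
          exact hyo k (fun h => hiS (h ▸ hk)) (fun h => hjS (h ▸ hk))
        rw [this]
        simp
    -- sum manipulation
    set F : (Fin a → Fin n) → ℝ :=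
      fun φ => ∏ k ∈ Finset.univ.image φ, y k - ∏ k ∈ Finset.univ.image φ, x k with hF
    have hsum : lagPoly Q H y - lagPoly Q H x = ∑ φ ∈ Inj Q H, F φ := by
      rw [lagPoly, lagPoly, ← Finset.sum_sub_distrib]
    have hswap : ∑ φ ∈ Inj Q H, F φ = ∑ φ ∈ Inj Q H, F (⇑σ ∘ φ) := by
      refine Finset.sum_nbij' (fun φ => ⇑σ ∘ φ) (fun φ => ⇑σ ∘ φ) hτmem hτmem
        (fun φ _ => hinv φ) (fun φ _ => hinv φ) ?_
      intro φ hφ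
      show F φ = F (⇑σ ∘ (⇑σ ∘ φ))
      rw [hinv]
    have himg : ∀ φ : Fin a → Fin n,
        Finset.univ.image (⇑σ ∘ φ) = (Finset.univ.image φ).image σ := by
      intro φ; rw [Finset.image_image]
    have h2 : 0 ≤ 2 * ∑ φ ∈ Inj Q H, F φ := by
      have : 2 * ∑ φ ∈ Inj Q H, F φ = ∑ φ ∈ Inj Q H, (F φ + F (⇑σ ∘ φ)) := by
        rw [Finset.sum_add_distrib, ← hswap]; ring
      rw [this]
      refine Finset.sum_nonneg fun φ _ => ?_
      have := key (Finset.univ.image φ)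
      rw [hF]
      simp only [himg φ]
      linarith [this]
    linarith [hsum, h2]
end

section
/- Let $\alpha \ge 1$ be a real number, $Q$ an $r$-graph, and $\mathcal{H}$ an $r$-graph on vertex set $[n]$. Let $P_1 \cup \cdots \cup P_k = [n]$ be a partition such that each $P_j$ is an equivalence class in $\mathcal{H}$ (any two vertices in the same $P_j$ are equivalent). Then there exists a vector $\mathbf{x} = (x_1,\ldots,x_n) \in \mathrm{OPT}_{\alpha,Q}(\mathcal{H})$ such that $x_i = x_j$ whenever $i$ and $j$ lie in the same part $P_\ell$. -/
open scoped Classical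
open Finset Filter Real

/- ### Auxiliary lemmas -/

lemma aux_prod_split {n : ℕ} {S : Finset (Fin n)} {i j : Fin n} (hi : i ∈ S) (hj : j ∈ S)
    (hij : i ≠ j) (f : Fin n → ℝ) :
    ∏ l ∈ S, f l = f i * (f j * ∏ l ∈ (S.erase i).erase j, f l) := by
  rw [← Finset.mul_prod_erase S f hi,
    ← Finset.mul_prod_erase (S.erase i) f (Finset.mem_erase.mpr ⟨hij.symm, hj⟩)]

lemma aux_sum_split {n : ℕ} {i j : Fin n} (hij : i ≠ j) (f : Fin n → ℝ) :
    ∑ l, f l = f i + f j + ∑ l ∈ (Finset.univ.erase i).erase j, f l := by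
  rw [← Finset.add_sum_erase Finset.univ f (Finset.mem_univ i),
    ← Finset.add_sum_erase (Finset.univ.erase i) f
      (Finset.mem_erase.mpr ⟨hij.symm, Finset.mem_univ j⟩), add_assoc]

lemma aux_lagPoly_swap {r a n : ℕ} (Q : RGraph r a) (H : RGraph r n) {i j : Fin n}
    (hsw : ∀ e : Finset (Fin n), e ∈ H.edges ↔ e.image (Equiv.swap i j) ∈ H.edges)
    (x : Fin n → ℝ) :
    lagPoly Q H (fun l => x (Equiv.swap i j l)) = lagPoly Q H x := by
  set σ := Equiv.swap i j with hσ
  have hmem : ∀ φ : Fin a → Fin n, φ ∈ Inj Q H → (fun v => σ (φ v)) ∈ Inj Q H := by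
    intro φ hφ
    simp only [Inj, Finset.mem_filter, Finset.mem_univ, true_and] at hφ ⊢
    refine ⟨σ.injective.comp hφ.1, fun e he => ?_⟩
    have : e.image (fun v => σ (φ v)) = (e.image φ).image σ := by
      rw [Finset.image_image]; rfl
    rw [this]
    exact (hsw _).mp (hφ.2 e he)
  unfold lagPoly
  refine Finset.sum_nbij' (fun φ => fun v => σ (φ v)) (fun φ => fun v => σ (φ v))
    hmem hmem ?_ ?_ ?_
  · intro φ _; funext v; simp [σ]
  · intro φ _; funext v; simp [σ]
  · intro φ _
    have himg : Finset.univ.image (fun v => σ (φ v)) = (Finset.univ.image φ).image σ := by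
      rw [Finset.image_image]; rfl
    rw [himg, Finset.prod_image (fun x _ y _ h => σ.injective h)]

lemma aux_prod_sym_ineq {n : ℕ} {i j : Fin n} (hij : i ≠ j) {z y : Fin n → ℝ}
    (hz : ∀ l, 0 ≤ z l) {t : ℝ} (ht0 : 0 ≤ t)
    (hsum : z i + z j ≤ 2 * t) (hprod : z i * z j ≤ t * t)
    (hyi : y i = t) (hyj : y j = t) (hyo : ∀ l, l ≠ i → l ≠ j → y l = z l)
    (S : Finset (Fin n)) :
    (∏ l ∈ S, z l + ∏ l ∈ S, z (Equiv.swap i j l)) / 2 ≤ ∏ l ∈ S, y l := by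
  set σ := Equiv.swap i j with hσ
  have hfix : ∀ l : Fin n, l ≠ i → l ≠ j → σ l = l := fun l h1 h2 =>
    Equiv.swap_apply_of_ne_of_ne h1 h2
  by_cases hiS : i ∈ S <;> by_cases hjS : j ∈ S
  · rw [aux_prod_split hiS hjS hij z, aux_prod_split hiS hjS hij (fun l => z (σ l)),
      aux_prod_split hiS hjS hij y]
    have hPσ : ∏ l ∈ (S.erase i).erase j, z (σ l) = ∏ l ∈ (S.erase i).erase j, z l := by
      refine Finset.prod_congr rfl fun l hl => ?_
      have hl' := Finset.mem_erase.mp hl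
      have hl'' := Finset.mem_erase.mp hl'.2
      rw [hfix l hl''.1 hl'.1]
    have hPy : ∏ l ∈ (S.erase i).erase j, y l = ∏ l ∈ (S.erase i).erase j, z l := by
      refine Finset.prod_congr rfl fun l hl => ?_
      have hl' := Finset.mem_erase.mp hl
      have hl'' := Finset.mem_erase.mp hl'.2
      exact hyo l hl''.1 hl'.1
    have hP0 : 0 ≤ ∏ l ∈ (S.erase i).erase j, z l := Finset.prod_nonneg fun l _ => hz l
    rw [hPσ, hPy, hyi, hyj]
    have hsi : σ i = j := Equiv.swap_apply_left i j
    have hsj : σ j = i := Equiv.swap_apply_right i j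
    simp only [hsi, hsj]
    nlinarith [mul_le_mul_of_nonneg_right hprod hP0]
  · rw [← Finset.mul_prod_erase S z hiS, ← Finset.mul_prod_erase S (fun l => z (σ l)) hiS,
      ← Finset.mul_prod_erase S y hiS]
    have hPσ : ∏ l ∈ S.erase i, z (σ l) = ∏ l ∈ S.erase i, z l := by
      refine Finset.prod_congr rfl fun l hl => ?_
      have hl' := Finset.mem_erase.mp hl
      rw [hfix l hl'.1 (fun h => hjS (h ▸ hl'.2))]
    have hPy : ∏ l ∈ S.erase i, y l = ∏ l ∈ S.erase i, z l := by
      refine Finset.prod_congr rfl fun l hl => ?_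
      have hl' := Finset.mem_erase.mp hl
      exact hyo l hl'.1 (fun h => hjS (h ▸ hl'.2))
    have hP0 : 0 ≤ ∏ l ∈ S.erase i, z l := Finset.prod_nonneg fun l _ => hz l
    rw [hPσ, hPy, hyi, Equiv.swap_apply_left]
    nlinarith [mul_le_mul_of_nonneg_right hsum hP0]
  · rw [← Finset.mul_prod_erase S z hjS, ← Finset.mul_prod_erase S (fun l => z (σ l)) hjS,
      ← Finset.mul_prod_erase S y hjS]
    have hPσ : ∏ l ∈ S.erase j, z (σ l) = ∏ l ∈ S.erase j, z l := by
      refine Finset.prod_congr rfl fun l hl => ?_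
      have hl' := Finset.mem_erase.mp hl
      rw [hfix l (fun h => hiS (h ▸ hl'.2)) hl'.1]
    have hPy : ∏ l ∈ S.erase j, y l = ∏ l ∈ S.erase j, z l := by
      refine Finset.prod_congr rfl fun l hl => ?_
      have hl' := Finset.mem_erase.mp hl
      exact hyo l (fun h => hiS (h ▸ hl'.2)) hl'.1
    have hP0 : 0 ≤ ∏ l ∈ S.erase j, z l := Finset.prod_nonneg fun l _ => hz l
    rw [hPσ, hPy, hyj, Equiv.swap_apply_right]
    nlinarith [mul_le_mul_of_nonneg_right hsum hP0]
  · have hPσ : ∏ l ∈ S, z (σ l) = ∏ l ∈ S, z l := by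
      refine Finset.prod_congr rfl fun l hl => ?_
      rw [hfix l (fun h => hiS (h ▸ hl)) (fun h => hjS (h ▸ hl))]
    have hPy : ∏ l ∈ S, y l = ∏ l ∈ S, z l := by
      refine Finset.prod_congr rfl fun l hl => ?_
      exact hyo l (fun h => hiS (h ▸ hl)) (fun h => hjS (h ▸ hl))
    rw [hPσ, hPy]; ring_nf; exact le_refl _

/-- **Lemma (an optimal vector constant on equivalence classes).** The partition of
`[n]` is given by the fibres of an index map `c : Fin n → Fin k`. -/
theorem exists_symmetric_optimal_vector {r a n k : ℕ} (hn : 1 ≤ n) {α : ℝ} (hα : 1 ≤ α)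
    (Q : RGraph r a) (H : RGraph r n) (c : Fin n → Fin k)
    (hc : ∀ i j : Fin n, c i = c j →
      ∀ e : Finset (Fin n), e ∈ H.edges ↔ e.image (Equiv.swap i j) ∈ H.edges) :
    ∃ x ∈ OPT α Q H, ∀ i j : Fin n, c i = c j → x i = x j := by
  have hα0 : (0:ℝ) < α := lt_of_lt_of_le one_pos hα
  -- continuity facts
  have hcontP : Continuous (lagPoly Q H) := by
    unfold lagPoly
    exact continuous_finset_sum _ fun φ _ =>
      continuous_finset_prod _ fun l _ => continuous_apply l
  have hcontN : Continuous fun x : Fin n → ℝ => ∑ l, |x l| ^ α := by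
    refine continuous_finset_sum _ fun l _ => ?_
    exact (continuous_abs.comp (continuous_apply l)).rpow_const fun x => Or.inr hα0.le
  -- compactness of the simplex
  have hclosed : IsClosed (simplex α n) := by
    have : simplex α n = (fun x : Fin n → ℝ => ∑ l, |x l| ^ α) ⁻¹' {1} := rfl
    rw [this]; exact isClosed_singleton.preimage hcontN
  have hsub : simplex α n ⊆ Metric.closedBall 0 1 := by
    intro x hx
    rw [Metric.mem_closedBall, dist_pi_le_iff zero_le_one]
    intro l
    show dist (x l) 0 ≤ 1
    rw [Real.dist_0_eq_abs]
    by_contra hgt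
    push_neg at hgt
    have h1 : |x l| ^ α ≤ ∑ m, |x m| ^ α :=
      Finset.single_le_sum (fun m _ => Real.rpow_nonneg (abs_nonneg _) α) (Finset.mem_univ l)
    have h2 : |x l| ^ (1:ℝ) ≤ |x l| ^ α :=
      Real.rpow_le_rpow_of_exponent_le hgt.le hα
    rw [Real.rpow_one] at h2
    have h3 : ∑ m, |x m| ^ α = 1 := hx
    linarith
  have hcomp : IsCompact (simplex α n) :=
    Metric.isCompact_of_isClosed_isBounded hclosed (Metric.isBounded_closedBall.subset hsub)
  have hne : (simplex α n).Nonempty := by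
    refine ⟨fun l => if l = ⟨0, hn⟩ then 1 else 0, ?_⟩
    show ∑ l, |if l = (⟨0, hn⟩ : Fin n) then (1:ℝ) else 0| ^ α = 1
    rw [Finset.sum_eq_single ⟨0, hn⟩]
    · simp [Real.one_rpow]
    · intro m _ hm; simp [hm, Real.zero_rpow hα0.ne']
    · intro h; exact absurd (Finset.mem_univ _) h
  -- the supremum is attained
  obtain ⟨z0, hz0, hz0max⟩ := hcomp.exists_isMaxOn hne hcontP.continuousOn
  have hbdd : BddAbove (lagPoly Q H '' simplex α n) := (hcomp.image hcontP).bddAbove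
  have hle : ∀ x ∈ simplex α n, lagPoly Q H x ≤ specRad α Q H := fun x hx =>
    le_csSup hbdd ⟨x, hx, rfl⟩
  have hspec : specRad α Q H = lagPoly Q H z0 := by
    refine IsGreatest.csSup_eq ⟨⟨z0, hz0, rfl⟩, ?_⟩
    rintro w ⟨u, hu, rfl⟩
    exact hz0max hu
  -- a nonnegative optimizer
  have hz1mem : (fun l => |z0 l|) ∈ simplex α n := by
    show ∑ l, |(|z0 l|)| ^ α = 1
    simp only [abs_abs]
    exact hz0
  have hz1ge : lagPoly Q H z0 ≤ lagPoly Q H (fun l => |z0 l|) := by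
    unfold lagPoly
    refine Finset.sum_le_sum fun φ _ => ?_
    calc ∏ l ∈ Finset.univ.image φ, z0 l
        ≤ |∏ l ∈ Finset.univ.image φ, z0 l| := le_abs_self _
      _ = ∏ l ∈ Finset.univ.image φ, |z0 l| := Finset.abs_prod _ _
  have hz1opt : lagPoly Q H (fun l => |z0 l|) = specRad α Q H :=
    le_antisymm (hle _ hz1mem) (le_trans (le_of_eq hspec) hz1ge)
  -- the compact set of nonnegative optimizers
  set T : Set (Fin n → ℝ) :=
    {x | x ∈ simplex α n ∧ (∀ l, 0 ≤ x l) ∧ lagPoly Q H x = specRad α Q H} with hTdef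
  have hTne : T.Nonempty := ⟨fun l => |z0 l|, hz1mem, fun l => abs_nonneg _, hz1opt⟩
  have hTclosed : IsClosed T := by
    have hT2 : T = simplex α n ∩
        ((⋂ l, {x : Fin n → ℝ | 0 ≤ x l}) ∩ {x | lagPoly Q H x = specRad α Q H}) := by
      ext x
      simp only [hTdef, Set.mem_inter_iff, Set.mem_iInter, Set.mem_setOf_eq]
    rw [hT2]
    exact hclosed.inter
      ((isClosed_iInter fun l => isClosed_le continuous_const (continuous_apply l)).inter
        (isClosed_eq hcontP continuous_const))
  have hTcomp : IsCompact T := hcomp.of_isClosed_subset hTclosed fun x hx => hx.1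
  -- minimize F on T
  set F : (Fin n → ℝ) → ℝ := fun x => ∑ l, (|x l| ^ α) ^ 2 with hFdef
  have hFcont : Continuous F := by
    refine continuous_finset_sum _ fun l _ => ?_
    exact ((continuous_abs.comp (continuous_apply l)).rpow_const fun x => Or.inr hα0.le).pow 2
  obtain ⟨z, hzT, hzmin⟩ := hTcomp.exists_isMinOn hTne hFcont.continuousOn
  obtain ⟨hzS, hz0le, hzopt⟩ := hzT
  refine ⟨z, ⟨hzS, hzopt⟩, ?_⟩
  by_contra hcon
  push_neg at hcon
  obtain ⟨i, j, hcij, hzij⟩ := hcon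
  have hij : i ≠ j := fun h => hzij (by rw [h])
  have ha : 0 ≤ z i := hz0le i
  have hb : 0 ≤ z j := hz0le j
  have hm : 0 ≤ (z i ^ α + z j ^ α) / 2 := by positivity
  set t : ℝ := ((z i ^ α + z j ^ α) / 2) ^ (1/α) with htdef
  have ht0 : 0 ≤ t := Real.rpow_nonneg hm _
  have htα : t ^ α = (z i ^ α + z j ^ α) / 2 := by
    rw [htdef, ← Real.rpow_mul hm, one_div_mul_cancel hα0.ne', Real.rpow_one]
  have hmean : z i + z j ≤ 2 * t := by
    have hconv := (convexOn_rpow hα).2 (Set.mem_Ici.mpr ha) (Set.mem_Ici.mpr hb)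
      (by norm_num : (0:ℝ) ≤ 1/2) (by norm_num : (0:ℝ) ≤ 1/2) (by norm_num)
    simp only [smul_eq_mul] at hconv
    have h1 : ((z i + z j)/2) ^ α ≤ t ^ α := by
      rw [htα]
      calc ((z i + z j)/2) ^ α = (1/2 * z i + 1/2 * z j) ^ α := by ring_nf
        _ ≤ 1/2 * z i ^ α + 1/2 * z j ^ α := hconv
        _ = (z i ^ α + z j ^ α)/2 := by ring
    have h2 := (Real.rpow_le_rpow_iff (by positivity) ht0 hα0).mp h1
    linarith
  have hprod : z i * z j ≤ t * t := by
    nlinarith [sq_nonneg (z i - z j), mul_le_mul hmean hmean (by positivity) (by positivity)]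
  -- the symmetrized vector
  set y : Fin n → ℝ := fun l => if l = i ∨ l = j then t else z l with hydef
  have hyi : y i = t := if_pos (Or.inl rfl)
  have hyj : y j = t := if_pos (Or.inr rfl)
  have hyo : ∀ l, l ≠ i → l ≠ j → y l = z l := fun l h1 h2 => if_neg (by tauto)
  have hy0 : ∀ l, 0 ≤ y l := by
    intro l
    by_cases h : l = i ∨ l = j
    · rw [show y l = t from if_pos h]; exact ht0
    · push_neg at h
      rw [hyo l h.1 h.2]; exact hz0le l
  have hzsum : ∑ l, |z l| ^ α = 1 := hzS
  have hyS : y ∈ simplex α n := by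
    show ∑ l, |y l| ^ α = 1
    rw [aux_sum_split hij (fun l => |y l| ^ α)]
    rw [aux_sum_split hij (fun l => |z l| ^ α)] at hzsum
    have hrest : ∑ l ∈ (Finset.univ.erase i).erase j, |y l| ^ α
        = ∑ l ∈ (Finset.univ.erase i).erase j, |z l| ^ α := by
      refine Finset.sum_congr rfl fun l hl => ?_
      have hl' := Finset.mem_erase.mp hl
      have hl'' := Finset.mem_erase.mp hl'.2
      rw [hyo l hl''.1 hl'.1]
    simp only [hyi, hyj] at *
    rw [hrest, abs_of_nonneg ht0, htα]
    rw [abs_of_nonneg ha, abs_of_nonneg hb] at hzsum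
    linarith
  -- the symmetrized vector is still optimal
  have hswap := aux_lagPoly_swap Q H (hc i j hcij) z
  have hkey : lagPoly Q H z ≤ lagPoly Q H y := by
    have hsum2 : (lagPoly Q H z + lagPoly Q H (fun l => z (Equiv.swap i j l))) / 2
        ≤ lagPoly Q H y := by
      unfold lagPoly
      rw [← Finset.sum_add_distrib, Finset.sum_div]
      exact Finset.sum_le_sum fun φ _ =>
        aux_prod_sym_ineq hij hz0le ht0 hmean hprod hyi hyj hyo _
    rw [hswap] at hsum2
    linarith
  have hyopt : lagPoly Q H y = specRad α Q H := by
    refine le_antisymm (hle y hyS) ?_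
    calc specRad α Q H = lagPoly Q H z := hzopt.symm
      _ ≤ lagPoly Q H y := hkey
  -- F strictly decreases: contradiction with minimality
  have hulv : z i ^ α ≠ z j ^ α := by
    rcases lt_trichotomy (z i) (z j) with h | h | h
    · exact ne_of_lt (Real.rpow_lt_rpow ha h hα0)
    · exact absurd h hzij
    · exact (ne_of_lt (Real.rpow_lt_rpow hb h hα0)).symm
  have hFlt : F y < F z := by
    show ∑ l, (|y l| ^ α) ^ 2 < ∑ l, (|z l| ^ α) ^ 2
    rw [aux_sum_split hij (fun l => (|y l| ^ α) ^ 2),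
      aux_sum_split hij (fun l => (|z l| ^ α) ^ 2)]
    have hrest : ∑ l ∈ (Finset.univ.erase i).erase j, (|y l| ^ α) ^ 2
        = ∑ l ∈ (Finset.univ.erase i).erase j, (|z l| ^ α) ^ 2 := by
      refine Finset.sum_congr rfl fun l hl => ?_
      have hl' := Finset.mem_erase.mp hl
      have hl'' := Finset.mem_erase.mp hl'.2
      rw [hyo l hl''.1 hl'.1]
    simp only [hyi, hyj]
    rw [hrest, abs_of_nonneg ht0, htα, abs_of_nonneg ha, abs_of_nonneg hb]
    have h0 : z i ^ α - z j ^ α ≠ 0 := sub_ne_zero.mpr hulv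
    have hpos : 0 < (z i ^ α - z j ^ α) ^ 2 :=
      lt_of_le_of_ne (sq_nonneg _) (Ne.symm (pow_ne_zero 2 h0))
    nlinarith [hpos]
  have hyT : y ∈ T := ⟨hyS, hy0, hyopt⟩
  exact absurd (isMinOn_iff.mp hzmin y hyT) (not_le.mpr hFlt)
end
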